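/- The complex ⋯ → kC^2⊗_{Λ_0}Λ →(d_2) kC^1⊗_{Λ_0}Λ →(d_1) kC^0⊗_{Λ_0}Λ → S_x → 0, where the final nonzero map sends x ⊗ c_{x,a} to δ_{x,a}·s for a generator s of S_x, is a minimal projective resolution of the simple right Λ-module S_x. -/

import Mathlib

set_option maxRecDepth 16000
set_option linter.unusedSectionVars false
set_option maxHeartbeats 1000000

open Finsupp

variable (k : Type) [Field k] (X : Type) [PartialOrder X] [Fintype X] [DecidableEq X]

/-- Ambient type in which the `i`-cycles live: `Amb 0 = X`,
`Amb (i+1) = (Amb i →₀ k) × X`. -/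
def Amb : ℕ → Type
  | 0 => X
  | i + 1 => ((Amb i) →₀ k) × X

/-- The "vertex" (second coordinate) of an element of `Amb i`. -/
def vtx : ∀ i : ℕ, Amb k X i → X
  | 0, a => a
  | _ + 1, p => p.2

/-- The ambient boundary map `∂_{i+1} : k C^{i+1} → k C^i`, defined on the whole
free module `Amb (i+1) →₀ k` by `(w, z) ↦ w`. -/
noncomputable def bd (i : ℕ) : (Amb k X (i + 1) →₀ k) →ₗ[k] (Amb k X i →₀ k) :=
  Finsupp.linearCombination k (fun p : Amb k X (i + 1) => p.1)

/-- `(ker ∂_{i+1})_z`: the subspace of elements of `ker ∂_{i+1}`, supported on `C^{i+1}`,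
all of whose support elements have second coordinate `< z`. -/
noncomputable def Kz (C : ∀ i : ℕ, Set (Amb k X i)) (i : ℕ) (z : X) :
    Submodule k (Amb k X (i + 1) →₀ k) :=
  LinearMap.ker (bd k X i) ⊓ Finsupp.supported k k (C (i + 1)) ⊓
    Finsupp.supported k k {p : Amb k X (i + 1) | vtx k X (i + 1) p < z}

/-- `(ker ∂_{i+1})_{z^-} = Σ_{z' ⋖ z} (ker ∂_{i+1})_{z'}`. -/
noncomputable def Kpred (C : ∀ i : ℕ, Set (Amb k X i)) (i : ℕ) (z : X) :
    Submodule k (Amb k X (i + 1) →₀ k) :=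
  ⨆ z' ∈ {z' : X | z' ⋖ z}, Kz k X C i z'

/-- `B^{i+2}_z'`: the set of `w` with `(w, z) ∈ C^{i+2}`. -/
def Bset (C : ∀ i : ℕ, Set (Amb k X i)) (i : ℕ) (z : X) : Set (Amb k X (i + 1) →₀ k) :=
  {w | (⟨w, z⟩ : Amb k X (i + 2)) ∈ C (i + 2)}

/-- The data of an admissible choice of `i`-cycles `C^i` for the poset `X` at the point `x`:
`C^0 = {x}`, `C^1 = {(x,y) : y ∈ x⁺}` and, recursively, for each `z` the set
`B^{i+2}_z' = {w | (w,z) ∈ C^{i+2}}` is a basis of a complement of `(ker ∂_{i+1})_{z⁻}`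
inside `(ker ∂_{i+1})_z`. -/
structure CycleData (x : X) : Type 1 where
  C : ∀ i : ℕ, Set (Amb k X i)
  hC0 : C 0 = {x}
  hC1 : C 1 = {p : Amb k X 1 | ∃ y : X, x ⋖ y ∧ p = ⟨Finsupp.single x 1, y⟩}
  indep : ∀ (i : ℕ) (z : X),
    LinearIndependent k (Subtype.val : Bset k X C i z → (Amb k X (i + 1) →₀ k))
  disj : ∀ (i : ℕ) (z : X),
    Submodule.span k (Bset k X C i z) ⊓ Kpred k X C i z = ⊥
  compl : ∀ (i : ℕ) (z : X),
    Submodule.span k (Bset k X C i z) ⊔ Kpred k X C i z = Kz k X C i z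

variable [DecidableRel (α := X) (· ≤ ·)]

instance : DecidableRel (α := X) (· < ·) := fun a b =>
  decidable_of_iff (a ≤ b ∧ ¬ b ≤ a) lt_iff_le_not_ge.symm

instance : LocallyFiniteOrder X := Fintype.toLocallyFiniteOrder

/-- The incidence algebra `Λ = kQ/I` of the poset `X`: functions on the pairs `a ≤ b`,
`c_{a,b}` corresponding to the characteristic function of `(a,b)`. -/
abbrev Lam := IncidenceAlgebra k X

/-- `Λ₀`, the (commutative, semisimple) subalgebra of `Λ` spanned by the stationary paths
`c_a`, identified with `k^X`. -/
abbrev Lam0 := X → k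

/-- The path `c_{a,b}` for `a ≤ b` (and junk value `0` if `a ≰ b`). -/
def cpath (a b : X) : Lam k X :=
  ⟨fun a' b' => if a' = a ∧ b' = b ∧ a ≤ b then 1 else 0, by
    intro a' b' h
    simp only [ite_eq_right_iff, one_ne_zero]
    rintro ⟨rfl, rfl, hab⟩
    exact (h hab).elim⟩

/-- The stationary path `c_a = c_{a,a}`. -/
def statp (a : X) : Lam k X := cpath k X a a

/-- The embedding of `Λ₀ = k^X` into `Λ` as the span of the stationary paths. -/
def diagHom : Lam0 k X →+* Lam k X where
  toFun f := ⟨fun a b => if a = b then f a else 0, by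
    intro a b h
    simp only [ite_eq_right_iff]
    rintro rfl
    exact (h le_rfl).elim⟩
  map_one' := by
    ext a b _
    simp [IncidenceAlgebra.one_apply]
  map_mul' f g := by
    ext a b hab
    rcases eq_or_ne a b with rfl | hne
    · simp [IncidenceAlgebra.mul_apply]
    · simp only [IncidenceAlgebra.coe_mk, IncidenceAlgebra.mul_apply, if_neg hne]
      rw [Finset.sum_eq_zero]
      intro x hx
      rcases eq_or_ne a x with rfl | hax
      · rw [if_neg hne]; ring
      · rw [if_neg hax]; ring
  map_zero' := by ext a b _; simp
  map_add' f g := by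
    ext a b hab
    rcases eq_or_ne a b with rfl | hne
    · simp [IncidenceAlgebra.add_apply]
    · simp [IncidenceAlgebra.add_apply, if_neg hne]

/-- `Λ` is a `Λ₀`-module via left multiplication through `diagHom`. -/
noncomputable instance : Module (Lam0 k X) (Lam k X) := Module.compHom _ (diagHom k X)

/-- The endomorphism of the free module `Amb i →₀ k` given by `f ∈ Λ₀ = k^X`, where `c_a`
acts on a basis element `p` by `δ_{vtx p, a}`. -/
noncomputable def phiAmbFun (i : ℕ) (f : Lam0 k X) :
    (Amb k X i →₀ k) →ₗ[k] (Amb k X i →₀ k) :=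
  Finsupp.lsum k fun p => f (vtx k X i p) • Finsupp.lsingle p

theorem phiAmbFun_single (i : ℕ) (f : Lam0 k X) (p : Amb k X i) (c : k) :
    phiAmbFun k X i f (Finsupp.single p c) = f (vtx k X i p) • Finsupp.single p c := by
  rw [phiAmbFun, Finsupp.lsum_single, LinearMap.smul_apply, Finsupp.lsingle_apply]

/-- The action of `Λ₀` on the free module `Amb i →₀ k` as a ring homomorphism to
endomorphisms. -/
noncomputable def phiAmb (i : ℕ) : Lam0 k X →+* Module.End k (Amb k X i →₀ k) where
  toFun f := phiAmbFun k X i f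
  map_one' := by
    apply Finsupp.lhom_ext
    intro p c
    rw [phiAmbFun_single, Module.End.one_apply, Pi.one_apply, one_smul]
  map_mul' f g := by
    apply Finsupp.lhom_ext
    intro p c
    show phiAmbFun k X i (f * g) (Finsupp.single p c) =
      (phiAmbFun k X i f * phiAmbFun k X i g) (Finsupp.single p c)
    rw [Module.End.mul_apply, phiAmbFun_single, phiAmbFun_single, map_smul,
      phiAmbFun_single, smul_smul, Pi.mul_apply, mul_comm]
  map_zero' := by
    apply Finsupp.lhom_ext
    intro p c
    rw [phiAmbFun_single, Pi.zero_apply, zero_smul, LinearMap.zero_apply]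
  map_add' f g := by
    apply Finsupp.lhom_ext
    intro p c
    rw [phiAmbFun_single, LinearMap.add_apply, phiAmbFun_single, phiAmbFun_single,
      Pi.add_apply, add_smul]

theorem phiAmb_apply (i : ℕ) (f : Lam0 k X) (g : Amb k X i →₀ k) (q : Amb k X i) :
    phiAmb k X i f g q = f (vtx k X i q) * g q := by
  induction g using Finsupp.induction_linear with
  | zero => simp
  | add a b ha hb => simp [ha, hb, mul_add]
  | single p c =>
    show phiAmbFun k X i f (Finsupp.single p c) q = _
    rw [phiAmbFun_single]
    rcases eq_or_ne p q with rfl | hpq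
    · simp [Finsupp.single_apply]
    · classical
      rw [Finsupp.smul_apply, Finsupp.single_apply, if_neg hpq, smul_zero, mul_zero]

theorem phiAmb_mem_supported (i : ℕ) (f : Lam0 k X) (s : Set (Amb k X i))
    (g : Amb k X i →₀ k) (hg : g ∈ Finsupp.supported k k s) :
    phiAmb k X i f g ∈ Finsupp.supported k k s := by
  rw [Finsupp.mem_supported'] at hg ⊢
  intro p hp
  rw [phiAmb_apply, hg p hp, mul_zero]

/-- The action of `Λ₀` on `kC^i` (the span of the `i`-cycles). -/
noncomputable def phiKC (C : ∀ i : ℕ, Set (Amb k X i)) (i : ℕ) :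
    Lam0 k X →+* Module.End k ↥(Finsupp.supported k k (C i)) where
  toFun f := (phiAmb k X i f).restrict
    (fun g hg => phiAmb_mem_supported k X i f (C i) g hg)
  map_one' := by
    apply LinearMap.ext
    rintro ⟨g, hg⟩
    apply Subtype.ext
    simp [LinearMap.restrict_apply]
  map_mul' f g := by
    apply LinearMap.ext
    rintro ⟨h, hh⟩
    apply Subtype.ext
    simp [LinearMap.restrict_apply]
  map_zero' := by
    apply LinearMap.ext
    rintro ⟨g, hg⟩
    apply Subtype.ext
    simp [LinearMap.restrict_apply]
  map_add' f g := by
    apply LinearMap.ext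
    rintro ⟨h, hh⟩
    apply Subtype.ext
    simp [LinearMap.restrict_apply]

/-- `kC^i` as a `Λ₀`-module. -/
noncomputable instance (C : ∀ i : ℕ, Set (Amb k X i)) (i : ℕ) :
    Module (Lam0 k X) ↥(Finsupp.supported k k (C i)) :=
  Module.compHom _ (phiKC k X C i)

open scoped TensorProduct

/-- Right multiplication by `a ∈ Λ` as a `Λ₀`-linear endomorphism of `Λ`. -/
noncomputable def rmulL (a : Lam k X) : Lam k X →ₗ[Lam0 k X] Lam k X where
  toFun b := b * a
  map_add' b c := add_mul b c a
  map_smul' f b := by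
    show (diagHom k X f * b) * a = diagHom k X f * (b * a)
    rw [mul_assoc]

/-- The right `Λ`-module structure (i.e. left `Λᵐᵒᵖ`-module structure) on `M ⊗_{Λ₀} Λ`,
`Λ` being a `Λ₀`-`Λ`-bimodule via right multiplication. -/
noncomputable instance modOpTensor (M : Type) [AddCommGroup M] [Module (Lam0 k X) M] :
    Module (Lam k X)ᵐᵒᵖ (M ⊗[Lam0 k X] Lam k X) where
  smul a t := LinearMap.lTensor M (rmulL k X a.unop) t
  one_smul t := by
    show LinearMap.lTensor M (rmulL k X (1 : (Lam k X)ᵐᵒᵖ).unop) t = t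
    have : rmulL k X ((1 : (Lam k X)ᵐᵒᵖ).unop) = LinearMap.id := by
      apply LinearMap.ext; intro b
      show b * 1 = b
      rw [mul_one]
    rw [this, LinearMap.lTensor_id, LinearMap.id_apply]
  mul_smul a b t := by
    show LinearMap.lTensor M (rmulL k X (a * b).unop) t =
      LinearMap.lTensor M (rmulL k X a.unop) (LinearMap.lTensor M (rmulL k X b.unop) t)
    have : rmulL k X ((a * b).unop) = (rmulL k X a.unop).comp (rmulL k X b.unop) := by
      apply LinearMap.ext; intro c
      show c * (b.unop * a.unop) = (c * b.unop) * a.unop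
      rw [mul_assoc]
    rw [this, LinearMap.lTensor_comp, LinearMap.comp_apply]
  smul_zero a := map_zero _
  smul_add a s t := map_add _ s t
  add_smul a b t := by
    show LinearMap.lTensor M (rmulL k X (a + b).unop) t =
      LinearMap.lTensor M (rmulL k X a.unop) t + LinearMap.lTensor M (rmulL k X b.unop) t
    have : rmulL k X ((a + b).unop) = rmulL k X a.unop + rmulL k X b.unop := by
      apply LinearMap.ext; intro c
      show c * (a.unop + b.unop) = c * a.unop + c * b.unop
      rw [mul_add]
    rw [this, LinearMap.lTensor_add, LinearMap.add_apply]
  zero_smul t := by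
    show LinearMap.lTensor M (rmulL k X (0 : (Lam k X)ᵐᵒᵖ).unop) t = 0
    have : rmulL k X ((0 : (Lam k X)ᵐᵒᵖ).unop) = 0 := by
      apply LinearMap.ext; intro c
      show c * 0 = 0
      rw [mul_zero]
    rw [this, LinearMap.lTensor_zero, LinearMap.zero_apply]

theorem opSmul_tmul (M : Type) [AddCommGroup M] [Module (Lam0 k X) M]
    (a : Lam k X) (m : M) (b : Lam k X) :
    (MulOpposite.op a) • (m ⊗ₜ[Lam0 k X] b) = m ⊗ₜ[Lam0 k X] (b * a) := rfl

/-- The sum `q_z = Σ_{u ≤ z} c_{u,z}` of the paths ending at `z`. -/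
noncomputable def qel (z : X) : Lam k X :=
  ∑ u ∈ Finset.univ.filter (· ≤ z), cpath k X u z

/-- `kC^i ⊗_{Λ₀} Λ`, the `i`-th term of the projective resolution, a right `Λ`-module. -/
noncomputable def TCmod (C : ∀ i : ℕ, Set (Amb k X i)) (i : ℕ) : Type :=
  ↥(Finsupp.supported k k (C i)) ⊗[Lam0 k X] Lam k X

noncomputable instance (C : ∀ i : ℕ, Set (Amb k X i)) (i : ℕ) : AddCommGroup (TCmod k X C i) :=
  TensorProduct.addCommGroup (R := Lam0 k X) (M := ↥(Finsupp.supported k k (C i))) (N := Lam k X)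

noncomputable instance (C : ∀ i : ℕ, Set (Amb k X i)) (i : ℕ) :
    Module (Lam k X)ᵐᵒᵖ (TCmod k X C i) :=
  modOpTensor k X ↥(Finsupp.supported k k (C i))

/-- The basis element of `kC^i` given by `p ∈ C^i`. -/
noncomputable def bas (C : ∀ i : ℕ, Set (Amb k X i)) (i : ℕ) (p : Amb k X i)
    (hp : p ∈ C i) : ↥(Finsupp.supported k k (C i)) :=
  ⟨Finsupp.single p 1, Finsupp.single_mem_supported k 1 hp⟩

/-- The generator `(w,z) ⊗ 1` of `kC^i ⊗_{Λ₀} Λ` given by `(w,z) ∈ C^i`. -/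
noncomputable def gen (C : ∀ i : ℕ, Set (Amb k X i)) (i : ℕ) (p : Amb k X i)
    (hp : p ∈ C i) : TCmod k X C i :=
  bas k X C i p hp ⊗ₜ[Lam0 k X] 1

/-- Evaluation of an element of `Λ` at the stationary pair `(z,z)`, a ring homomorphism. -/
noncomputable def evalHom (z : X) : Lam k X →+* k where
  toFun f := f z z
  map_one' := by simp
  map_mul' f g := by
    show (f * g) z z = f z z * g z z
    rw [IncidenceAlgebra.mul_apply, Finset.Icc_self, Finset.sum_singleton]
  map_zero' := rfl
  map_add' f g := rfl

/-- The simple right `Λ`-module `S_z` at the vertex `z`: a copy of `k` on which `λ ∈ Λ`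
acts by multiplication by `λ(z,z)`. -/
def SMod (_z : X) : Type := k

noncomputable instance (z : X) : AddCommGroup (SMod k X z) := inferInstanceAs (AddCommGroup k)
noncomputable instance (z : X) : Module k (SMod k X z) := inferInstanceAs (Module k k)
instance (z : X) : One (SMod k X z) := ⟨(1 : k)⟩

/-- The right `Λ`-module structure on `S_z`. -/
noncomputable instance (z : X) : Module (Lam k X)ᵐᵒᵖ (SMod k X z) :=
  Module.compHom k ((evalHom k X z).fromOpposite (fun a b => mul_comm _ _))

/-- The right `Λ₀`-module structure on `S_z` (the restriction of the `Λ`-action). -/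
noncomputable instance (z : X) : Module (Lam0 k X) (SMod k X z) :=
  Module.compHom k (Pi.evalRingHom (fun _ : X => k) z)

instance (z : X) : SMulCommClass (Lam k X)ᵐᵒᵖ k (SMod k X z) where
  smul_comm a c m := mul_left_comm (evalHom k X z (MulOpposite.unop a)) c m

instance (z : X) : SMulCommClass k (Lam k X)ᵐᵒᵖ (SMod k X z) where
  smul_comm c a m := (mul_left_comm (evalHom k X z (MulOpposite.unop a)) c m).symm

/-- The indecomposable projective right `Λ`-module `P_z = c_z Λ`. -/
noncomputable def PMod (z : X) : Submodule (Lam k X)ᵐᵒᵖ (Lam k X) :=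
  Submodule.span (Lam k X)ᵐᵒᵖ {statp k X z}

/-- The radical `M · J(Λ)` of a right `Λ`-module `M`, where `J(Λ)` is the Jacobson radical. -/
noncomputable def radMod (M : Type) [AddCommGroup M] [Module (Lam k X)ᵐᵒᵖ M] :
    Submodule (Lam k X)ᵐᵒᵖ M :=
  Submodule.span (Lam k X)ᵐᵒᵖ
    {m | ∃ a ∈ Ideal.jacobson (⊥ : Ideal (Lam k X)ᵐᵒᵖ), ∃ n : M, m = a • n}

/-- `|B^i_b|`: the number of `i`-cycles with second coordinate `b`. -/
noncomputable def Bcard (C : ∀ i : ℕ, Set (Amb k X i)) (i : ℕ) (b : X) : ℕ :=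
  Set.ncard {p : Amb k X i | p ∈ C i ∧ vtx k X i p = b}

/-- The predicate singling out the differentials `d_{i+1} : kC^{i+1} ⊗_{Λ₀} Λ → kC^i ⊗_{Λ₀} Λ`
of the resolution: `d ((w,z) ⊗ 1) = w ⊗ q_z` for `(w,z) ∈ C^{i+1}`. (These properties determine
the maps `d` uniquely.) -/
def IsDiff {x : X} (D : CycleData k X x)
    (d : ∀ i : ℕ, TCmod k X D.C (i + 1) →ₗ[(Lam k X)ᵐᵒᵖ] TCmod k X D.C i) : Prop :=
  ∀ (i : ℕ) (p : Amb k X (i + 1)) (hp : p ∈ D.C (i + 1))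
    (w : ↥(Finsupp.supported k k (D.C i))) (_hw : (w : Amb k X i →₀ k) = p.1),
    d i (gen k X D.C (i + 1) p hp) = w ⊗ₜ[Lam0 k X] qel k X (vtx k X (i + 1) p)

noncomputable instance rawOpModule (C : ∀ i : ℕ, Set (Amb k X i)) (i : ℕ) :
    Module (Lam k X)ᵐᵒᵖ (↥(Finsupp.supported k k (C i)) ⊗[Lam0 k X] Lam k X) :=
  modOpTensor k X ↥(Finsupp.supported k k (C i))

/-! ### Auxiliary lemmas -/

theorem cpath_app (a b u v : X) :
    cpath k X a b u v = if u = a ∧ v = b ∧ a ≤ b then 1 else 0 := rfl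

theorem cpath_zero_of_not_le {a b : X} (h : ¬ a ≤ b) : cpath k X a b = 0 := by
  apply IncidenceAlgebra.ext
  intro u v _
  rw [cpath_app, IncidenceAlgebra.zero_apply, if_neg]
  rintro ⟨_, _, hab⟩
  exact h hab

theorem ia_sum_apply {ι : Type*} (s : Finset ι) (f : ι → Lam k X) (a b : X) :
    (∑ i ∈ s, f i) a b = ∑ i ∈ s, f i a b := by
  classical
  induction s using Finset.induction_on with
  | empty => simp [IncidenceAlgebra.zero_apply]
  | insert _ _ hni ih =>
      rw [Finset.sum_insert hni, Finset.sum_insert hni, IncidenceAlgebra.add_apply, ih]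

theorem cpath_mul_cpath (a b c d : X) :
    cpath k X a b * cpath k X c d =
      if b = c ∧ a ≤ b ∧ c ≤ d then cpath k X a d else 0 := by
  apply IncidenceAlgebra.ext
  intro u v huv
  rw [IncidenceAlgebra.mul_apply]
  have hterm : ∀ t ∈ Finset.Icc u v,
      cpath k X a b u t * cpath k X c d t v =
        if t = b ∧ u = a ∧ v = d ∧ a ≤ b ∧ c ≤ d ∧ b = c then 1 else 0 := by
    intro t _
    rw [cpath_app, cpath_app]
    by_cases h1 : u = a ∧ t = b ∧ a ≤ b
    · by_cases h2 : t = c ∧ v = d ∧ c ≤ d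
      · rw [if_pos h1, if_pos h2, one_mul, if_pos
          ⟨h1.2.1, h1.1, h2.2.1, h1.2.2, h2.2.2, h1.2.1.symm.trans h2.1⟩]
      · rw [if_pos h1, if_neg h2, one_mul, if_neg]
        rintro ⟨ht, hu, hv, hab2, hcd, hbc⟩
        exact h2 ⟨ht.trans hbc, hv, hcd⟩
    · rw [if_neg h1, zero_mul, if_neg]
      rintro ⟨ht, hu, hv, hab2, hcd, hbc⟩
      exact h1 ⟨hu, ht, hab2⟩
  rw [Finset.sum_congr rfl hterm]
  by_cases h : b = c ∧ a ≤ b ∧ c ≤ d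
  · obtain ⟨rfl, hab, hbd⟩ := h
    rw [if_pos ⟨rfl, hab, hbd⟩, cpath_app]
    by_cases huv2 : u = a ∧ v = d
    · obtain ⟨rfl, rfl⟩ := huv2
      rw [if_pos ⟨rfl, rfl, hab.trans hbd⟩, Finset.sum_eq_single b]
      · rw [if_pos ⟨rfl, rfl, rfl, hab, hbd, rfl⟩]
      · intro t _ htb
        rw [if_neg (fun hh => htb hh.1)]
      · intro hb
        exact absurd (Finset.mem_Icc.2 ⟨hab, hbd⟩) hb
    · rw [if_neg (fun hh => huv2 ⟨hh.1, hh.2.1⟩)]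
      apply Finset.sum_eq_zero
      intro t _
      rw [if_neg (fun hh => huv2 ⟨hh.2.1, hh.2.2.1⟩)]
  · rw [if_neg h, IncidenceAlgebra.zero_apply]
    apply Finset.sum_eq_zero
    intro t _
    rw [if_neg]
    rintro ⟨_, -, -, hab2, hcd, hbc⟩
    exact h ⟨hbc, hab2, hcd⟩

theorem statp_mul_cpath (u a b : X) :
    statp k X u * cpath k X a b = if u = a then cpath k X a b else 0 := by
  rw [statp, cpath_mul_cpath]
  by_cases h : u = a
  · subst h
    by_cases hab : u ≤ b
    · rw [if_pos ⟨rfl, le_refl _, hab⟩, if_pos rfl]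
    · rw [if_neg (fun hh => hab hh.2.2), if_pos rfl, cpath_zero_of_not_le k X hab]
  · rw [if_neg (fun hh => h hh.1), if_neg h]

theorem statp_mul_cpath_self (u b : X) :
    statp k X u * cpath k X u b = cpath k X u b := by
  rw [statp_mul_cpath, if_pos rfl]

theorem qel_mul_cpath {z b : X} (h : z ≤ b) :
    qel k X z * cpath k X z b = ∑ u ∈ Finset.univ.filter (· ≤ z), cpath k X u b := by
  rw [qel, Finset.sum_mul]
  refine Finset.sum_congr rfl fun u hu => ?_
  rw [Finset.mem_filter] at hu
  rw [cpath_mul_cpath, if_pos ⟨rfl, hu.2, h⟩]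

theorem diagHom_app (f : Lam0 k X) (a b : X) :
    diagHom k X f a b = if a = b then f a else 0 := rfl

theorem diagHom_mul_apply (f : Lam0 k X) (l : Lam k X) (a b : X) :
    (diagHom k X f * l) a b = f a * l a b := by
  by_cases hab : a ≤ b
  · rw [IncidenceAlgebra.mul_apply]
    rw [Finset.sum_eq_single a]
    · rw [diagHom_app, if_pos rfl]
    · intro t _ hta
      rw [diagHom_app, if_neg (fun hh => hta hh.symm), zero_mul]
    · intro ha
      exact absurd (Finset.mem_Icc.2 ⟨le_refl a, hab⟩) ha
  · rw [IncidenceAlgebra.apply_eq_zero_of_not_le hab, IncidenceAlgebra.apply_eq_zero_of_not_le hab,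
      mul_zero]

theorem mul_diagHom_apply (f : Lam0 k X) (l : Lam k X) (a b : X) :
    (l * diagHom k X f) a b = l a b * f b := by
  by_cases hab : a ≤ b
  · rw [IncidenceAlgebra.mul_apply]
    rw [Finset.sum_eq_single b]
    · rw [diagHom_app, if_pos rfl]
    · intro t _ htb
      rw [diagHom_app, if_neg htb, mul_zero]
    · intro hb
      exact absurd (Finset.mem_Icc.2 ⟨hab, le_refl b⟩) hb
  · rw [IncidenceAlgebra.apply_eq_zero_of_not_le hab, IncidenceAlgebra.apply_eq_zero_of_not_le hab,
      zero_mul]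

theorem lam0_smul_lam (f : Lam0 k X) (l : Lam k X) : f • l = diagHom k X f * l := rfl

theorem const_smul_lam (c : k) (l : Lam k X) :
    ((fun _ : X => c) : Lam0 k X) • l = c • l := by
  rw [lam0_smul_lam]
  apply IncidenceAlgebra.ext
  intro a b hab
  rw [diagHom_mul_apply, IncidenceAlgebra.constSMul_apply, smul_eq_mul]

theorem diagHom_single_mul_cpath (u a b : X) :
    diagHom k X (Pi.single u (1:k)) * cpath k X a b = if u = a then cpath k X a b else 0 := by
  apply IncidenceAlgebra.ext
  intro a' b' hab
  rw [diagHom_mul_apply, cpath_app]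
  by_cases h : u = a
  · subst h
    rw [if_pos rfl, cpath_app]
    by_cases h2 : a' = u
    · subst h2; rw [Pi.single_eq_same, one_mul]
    · rw [Pi.single_eq_of_ne h2, zero_mul, if_neg (fun hh => h2 hh.1)]
  · rw [if_neg h, IncidenceAlgebra.zero_apply]
    by_cases h2 : a' = a
    · subst h2
      rw [Pi.single_eq_of_ne (fun hh => h hh.symm), zero_mul]
    · rw [if_neg (fun hh => h2 hh.1), mul_zero]

theorem lam_eq_sum_cpath (l : Lam k X) :
    l = ∑ p ∈ (Finset.univ : Finset (X × X)), l p.1 p.2 • cpath k X p.1 p.2 := by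
  apply IncidenceAlgebra.ext
  intro a b hab
  rw [ia_sum_apply]
  rw [Finset.sum_eq_single (a, b)]
  · rw [IncidenceAlgebra.constSMul_apply, cpath_app, if_pos ⟨rfl, rfl, hab⟩, smul_eq_mul, mul_one]
  · intro p _ hp
    rw [IncidenceAlgebra.constSMul_apply, cpath_app, if_neg, smul_eq_mul, mul_zero]
    rintro ⟨rfl, rfl, -⟩
    exact hp rfl
  · intro h
    exact absurd (Finset.mem_univ _) h

/-! ### The Jacobson radical contains strict elements -/

def IsStrict (f : Lam k X) : Prop := ∀ u v : X, ¬ u < v → f u v = 0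

theorem isStrict_mul (f g : Lam k X) (hf : IsStrict k X f) : IsStrict k X (f * g) := by
  intro u v huv
  by_cases hle : u ≤ v
  · rw [IncidenceAlgebra.mul_apply]
    apply Finset.sum_eq_zero
    intro t ht
    rw [Finset.mem_Icc] at ht
    have : ¬ u < t := by
      intro hut
      exact huv (lt_of_lt_of_le hut ht.2)
    rw [hf u t this, zero_mul]
  · exact IncidenceAlgebra.apply_eq_zero_of_not_le hle _

theorem isStrict_cpath {a b : X} (h : a < b) : IsStrict k X (cpath k X a b) := by
  intro u v huv
  rw [cpath_app, if_neg]
  rintro ⟨rfl, rfl, -⟩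
  exact huv h

/-- The "height" of an element. -/
private def hgt (u : X) : ℕ := (Finset.univ.filter (· ≤ u)).card

theorem hgt_lt_hgt {u v : X} (h : u < v) : hgt X u < hgt X v := by
  apply Finset.card_lt_card
  rw [Finset.ssubset_iff_of_subset]
  · exact ⟨v, by simp, by simp [not_le_of_gt h]⟩
  · intro t ht
    rw [Finset.mem_filter] at ht ⊢
    exact ⟨ht.1, ht.2.trans h.le⟩

theorem isStrict_pow_apply (f : Lam k X) (hf : IsStrict k X f) :
    ∀ (n : ℕ) (u v : X), (f ^ n) u v ≠ 0 → hgt X u + n ≤ hgt X v := by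
  intro n
  induction n with
  | zero =>
      intro u v h
      rw [pow_zero, IncidenceAlgebra.one_apply] at h
      have : u = v := by
        by_contra hne
        exact h (if_neg hne)
      subst this
      simp
  | succ n ih =>
      intro u v h
      rw [pow_succ, IncidenceAlgebra.mul_apply] at h
      obtain ⟨t, _, hterm⟩ := Finset.exists_ne_zero_of_sum_ne_zero h
      have h1 : (f ^ n) u t ≠ 0 := fun hh => hterm (by rw [hh, zero_mul])
      have h2 : f t v ≠ 0 := fun hh => hterm (by rw [hh, mul_zero])
      have h3 : t < v := by
        by_contra hlt
        exact h2 (hf t v hlt)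
      have ha := ih u t h1
      have hb := hgt_lt_hgt X h3
      omega

theorem isStrict_nilpotent (f : Lam k X) (hf : IsStrict k X f) : IsNilpotent f := by
  refine ⟨Fintype.card X, ?_⟩
  apply IncidenceAlgebra.ext
  intro u v _
  rw [IncidenceAlgebra.zero_apply]
  by_contra h
  have h1 := isStrict_pow_apply k X f hf (Fintype.card X) u v h
  have h2 : 1 ≤ hgt X u := Finset.card_pos.2 ⟨u, by simp⟩
  have h3 : hgt X v ≤ Fintype.card X := (Finset.univ.filter (· ≤ v)).card_le_univ.trans_eq
    (Finset.card_univ)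
  omega

open MulOpposite in
theorem isStrict_op_mem_jacobson (f : Lam k X) (hf : IsStrict k X f) :
    op f ∈ Ideal.jacobson (⊥ : Ideal (Lam k X)ᵐᵒᵖ) := by
  rw [Ideal.jacobson, Ideal.mem_sInf]
  rintro J ⟨-, hJ⟩
  by_contra hnot
  have hlt : J < J ⊔ Submodule.span (Lam k X)ᵐᵒᵖ {op f} := by
    rw [left_lt_sup]
    intro hle
    exact hnot (hle (Submodule.mem_span_singleton_self _))
  have htop : J ⊔ Submodule.span (Lam k X)ᵐᵒᵖ {op f} = ⊤ :=
    (Ideal.isMaximal_def.1 hJ).2 _ hlt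
  have h1 : (1 : (Lam k X)ᵐᵒᵖ) ∈ J ⊔ Submodule.span (Lam k X)ᵐᵒᵖ {op f} := by
    rw [htop]; exact Submodule.mem_top
  obtain ⟨m, hm, y, hy, hsum⟩ := Submodule.mem_sup.1 h1
  obtain ⟨r, rfl⟩ := Submodule.mem_span_singleton.1 hy
  have hry : r • op f = op (f * r.unop) := rfl
  have hmeq : m = op (1 - f * r.unop) := by
    have : m = 1 - r • op f := by rw [← hsum]; abel
    rw [this, hry]
    rfl
  have hunit : IsUnit m := by
    rw [hmeq]
    have hnil : IsNilpotent (f * r.unop) := isStrict_nilpotent k X _ (isStrict_mul k X f r.unop hf)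
    have : IsUnit (1 - f * r.unop) := IsNilpotent.isUnit_one_sub hnil
    exact isUnit_op.2 this
  exact hJ.ne_top (Ideal.eq_top_of_isUnit_mem J hm hunit)

/-! ### Module structures -/

section Modules

variable (C : ∀ i : ℕ, Set (Amb k X i))

theorem lam0_smul_V (i : ℕ) (f : Lam0 k X) (v : ↥(Finsupp.supported k k (C i))) :
    ((f • v : ↥(Finsupp.supported k k (C i))) : Amb k X i →₀ k) = phiAmb k X i f (v : Amb k X i →₀ k) := rfl

noncomputable instance (i : ℕ) : SMulCommClass (Lam0 k X) k ↥(Finsupp.supported k k (C i)) where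
  smul_comm f c v := by
    apply Subtype.ext
    rw [lam0_smul_V]
    show phiAmb k X i f (c • (v : Amb k X i →₀ k)) = c • phiAmb k X i f (v : Amb k X i →₀ k)
    exact (phiAmb k X i f).map_smul c _

noncomputable instance (i : ℕ) : SMulCommClass k (Lam0 k X) ↥(Finsupp.supported k k (C i)) :=
  SMulCommClass.symm _ _ _

theorem const_smul_V (i : ℕ) (c : k) (v : ↥(Finsupp.supported k k (C i))) :
    ((fun _ : X => c) : Lam0 k X) • v = c • v := by
  apply Subtype.ext
  rw [lam0_smul_V]
  ext q
  rw [phiAmb_apply]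
  rfl

noncomputable instance instTCk (i : ℕ) : Module k (TCmod k X C i) :=
  TensorProduct.leftModule

theorem smul_one_lam (c : k) : c • (1 : Lam k X) = diagHom k X (fun _ : X => c) := by
  apply IncidenceAlgebra.ext
  intro a b _
  rw [IncidenceAlgebra.constSMul_apply, IncidenceAlgebra.one_apply, diagHom_app]
  split_ifs <;> simp

theorem op_const_smul (i : ℕ) (c : k) (t : TCmod k X C i) :
    (MulOpposite.op (c • (1 : Lam k X))) • t = c • t := by
  have h : ∀ t : ↥(Finsupp.supported k k (C i)) ⊗[Lam0 k X] Lam k X,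
      (MulOpposite.op (c • (1 : Lam k X))) • t = c • t := by
    intro t
    induction t using TensorProduct.induction_on with
    | zero => rw [smul_zero, smul_zero]
    | tmul m n =>
        erw [opSmul_tmul]
        have h1 : n * (c • (1 : Lam k X)) = ((fun _ : X => c) : Lam0 k X) • n := by
          rw [mul_smul_comm, mul_one, const_smul_lam]
        rw [h1, TensorProduct.tmul_smul, TensorProduct.smul_tmul', const_smul_V,
          ← TensorProduct.smul_tmul']
    | add a b ha hb =>
        rw [smul_add (MulOpposite.op (c • (1 : Lam k X))) a b, smul_add c a b, ha, hb]
  exact h t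

/-- `basElt q` is the basis element `single q 1` if `q ∈ C i`, else `0`. -/
noncomputable def basElt (i : ℕ) (q : Amb k X i) : ↥(Finsupp.supported k k (C i)) := by
  classical exact if h : q ∈ C i then bas k X C i q h else 0

theorem basElt_of_mem {i : ℕ} {q : Amb k X i} (h : q ∈ C i) :
    basElt k X C i q = bas k X C i q h := by
  rw [basElt]
  simp [h]

theorem pisingle_smul_basElt (i : ℕ) (u : X) (q : Amb k X i) :
    ((Pi.single u (1:k) : Lam0 k X)) • basElt k X C i q =
      if u = vtx k X i q then basElt k X C i q else 0 := by
  by_cases hq : q ∈ C i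
  · rw [basElt_of_mem k X C hq]
    apply Subtype.ext
    rw [lam0_smul_V]
    show phiAmb k X i _ (Finsupp.single q 1) = _
    have := phiAmbFun_single k X i ((Pi.single u (1:k) : Lam0 k X)) q 1
    rw [phiAmb, RingHom.coe_mk, MonoidHom.coe_mk, OneHom.coe_mk] at *
    rw [this]
    by_cases h : u = vtx k X i q
    · subst h
      rw [Pi.single_eq_same, one_smul, if_pos rfl]
      rfl
    · rw [Pi.single_eq_of_ne (fun hh => h hh.symm), zero_smul, if_neg h]
      rfl
  · rw [basElt, dif_neg hq, smul_zero]
    split_ifs <;> rfl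

theorem V_sum_basElt (i : ℕ) (v : ↥(Finsupp.supported k k (C i))) :
    ((v : Amb k X i →₀ k).sum fun p c => c • basElt k X C i p) = v := by
  apply Subtype.ext
  have hcoe : ∀ p ∈ (v : Amb k X i →₀ k).support,
      ((fun p (c:k) => c • basElt k X C i p) p ((v : Amb k X i →₀ k) p) : ↥(Finsupp.supported k k (C i))).val
        = Finsupp.single p ((v : Amb k X i →₀ k) p) := by
    intro p hp
    have hpC : p ∈ C i := v.2 hp
    show (((v : Amb k X i →₀ k) p) • basElt k X C i p).val = _
    rw [basElt_of_mem k X C hpC]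
    show ((v : Amb k X i →₀ k) p) • (Finsupp.single p (1:k)) = _
    rw [Finsupp.smul_single, smul_eq_mul, mul_one]
  calc ((v : Amb k X i →₀ k).sum fun p c => c • basElt k X C i p).val
      = (v : Amb k X i →₀ k).sum (fun p c => ((c • basElt k X C i p :
          ↥(Finsupp.supported k k (C i))) : Amb k X i →₀ k)) := by
        exact map_finsuppSum (Submodule.subtype _) _ _
    _ = (v : Amb k X i →₀ k).sum (fun p c => Finsupp.single p c) := by
        apply Finsupp.sum_congr
        intro p hp
        exact hcoe p hp
    _ = v := Finsupp.sum_single _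

end Modules

/-! ### The splitting of the projection from a free module -/

theorem diagHom_mul_statp (f : Lam0 k X) (u : X) :
    diagHom k X f * statp k X u = f u • statp k X u := by
  apply IncidenceAlgebra.ext
  intro a b _
  rw [diagHom_mul_apply, IncidenceAlgebra.constSMul_apply, statp, cpath_app, smul_eq_mul]
  by_cases h : a = u ∧ b = u ∧ u ≤ u
  · rw [if_pos h]
    rw [h.1]
  · rw [if_neg h, mul_zero, mul_zero]

theorem statp_mul_diagHom (f : Lam0 k X) (u : X) :
    statp k X u * diagHom k X f = f u • statp k X u := by
  apply IncidenceAlgebra.ext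
  intro a b _
  rw [mul_diagHom_apply, IncidenceAlgebra.constSMul_apply, statp, cpath_app, smul_eq_mul]
  by_cases h : a = u ∧ b = u ∧ u ≤ u
  · rw [if_pos h, h.2.1, mul_comm]
  · rw [if_neg h, zero_mul, mul_zero]

theorem diagHom_pi_single (u : X) :
    diagHom k X (Pi.single u (1:k)) = statp k X u := by
  apply IncidenceAlgebra.ext
  intro a b _
  rw [diagHom_app, statp, cpath_app]
  by_cases h : a = b
  · subst h
    by_cases h2 : a = u
    · subst h2
      rw [if_pos rfl, Pi.single_eq_same, if_pos ⟨rfl, rfl, le_refl _⟩]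
    · rw [if_pos rfl, Pi.single_eq_of_ne h2, if_neg (fun hh => h2 hh.1)]
  · rw [if_neg h, if_neg]
    rintro ⟨rfl, rfl, -⟩
    exact h rfl

section Smap

variable (C : ∀ i : ℕ, Set (Amb k X i))

/-- The section of the projection from the free module, as a plain function. -/
noncomputable def SB (i : ℕ) (w : ↥(Finsupp.supported k k (C i))) (l : Lam k X) :
    Amb k X i →₀ (Lam k X)ᵐᵒᵖ :=
  (w : Amb k X i →₀ k).sum fun p c =>
    Finsupp.single p (MulOpposite.op (c • (statp k X (vtx k X i p) * l)))

theorem SB_add_left (i : ℕ) (w w' : ↥(Finsupp.supported k k (C i))) (l : Lam k X) :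
    SB k X C i (w + w') l = SB k X C i w l + SB k X C i w' l := by
  rw [SB, SB, SB]
  show Finsupp.sum ((w : Amb k X i →₀ k) + (w' : Amb k X i →₀ k)) _ = _
  rw [Finsupp.sum_add_index']
  · intro p
    rw [zero_smul, MulOpposite.op_zero, Finsupp.single_zero]
  · intro p c1 c2
    rw [add_smul, MulOpposite.op_add, Finsupp.single_add]

theorem SB_smul_left (i : ℕ) (f : Lam0 k X) (w : ↥(Finsupp.supported k k (C i)))
    (l : Lam k X) : SB k X C i (f • w) l = f • SB k X C i w l := by
  rw [SB, SB, Finsupp.smul_sum, lam0_smul_V]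
  have hsupp : (phiAmb k X i f (w : Amb k X i →₀ k)).support ⊆ (w : Amb k X i →₀ k).support := by
    intro p hp
    rw [Finsupp.mem_support_iff] at hp ⊢
    intro h0
    rw [phiAmb_apply, h0, mul_zero] at hp
    exact hp rfl
  rw [Finsupp.sum_of_support_subset _ hsupp _
    (fun p _ => by rw [zero_smul, MulOpposite.op_zero, Finsupp.single_zero])]
  rw [Finsupp.sum]
  refine Finset.sum_congr rfl fun p _ => ?_
  rw [phiAmb_apply, Finsupp.smul_single]
  congr 1
  rw [← MulOpposite.op_smul, lam0_smul_lam, mul_smul_comm, ← mul_assoc, diagHom_mul_statp,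
    smul_mul_assoc, smul_smul, mul_comm]

theorem SB_add_right (i : ℕ) (w : ↥(Finsupp.supported k k (C i))) (l l' : Lam k X) :
    SB k X C i w (l + l') = SB k X C i w l + SB k X C i w l' := by
  rw [SB, SB, SB, ← Finsupp.sum_add]
  refine Finsupp.sum_congr fun p _ => ?_
  rw [mul_add, smul_add, MulOpposite.op_add, Finsupp.single_add]

theorem statp_mul_smul (f : Lam0 k X) (l : Lam k X) (u : X) :
    statp k X u * (diagHom k X f * l) = diagHom k X f * (statp k X u * l) := by
  rw [← mul_assoc, ← mul_assoc, statp_mul_diagHom, diagHom_mul_statp]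

theorem SB_smul_right (i : ℕ) (f : Lam0 k X) (w : ↥(Finsupp.supported k k (C i)))
    (l : Lam k X) : SB k X C i w (f • l) = f • SB k X C i w l := by
  rw [SB, SB, Finsupp.smul_sum]
  refine Finsupp.sum_congr fun p _ => ?_
  rw [Finsupp.smul_single, ← MulOpposite.op_smul]
  congr 1
  simp only [lam0_smul_lam]
  rw [mul_smul_comm, statp_mul_smul]

/-- The section, as a `Λ₀`-linear map on the tensor product. -/
noncomputable def sLin (i : ℕ) :
    (↥(Finsupp.supported k k (C i)) ⊗[Lam0 k X] Lam k X) →ₗ[Lam0 k X]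
      (Amb k X i →₀ (Lam k X)ᵐᵒᵖ) :=
  TensorProduct.lift (LinearMap.mk₂ (Lam0 k X) (SB k X C i) (SB_add_left k X C i)
    (SB_smul_left k X C i) (SB_add_right k X C i) (SB_smul_right k X C i))

theorem sLin_tmul (i : ℕ) (w : ↥(Finsupp.supported k k (C i))) (l : Lam k X) :
    sLin k X C i (w ⊗ₜ[Lam0 k X] l) = SB k X C i w l := rfl

theorem sLin_opsmul (i : ℕ) (a : (Lam k X)ᵐᵒᵖ) (t : TCmod k X C i) :
    sLin k X C i (a • t) = a • sLin k X C i t := by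
  have h : ∀ t : ↥(Finsupp.supported k k (C i)) ⊗[Lam0 k X] Lam k X,
      sLin k X C i (a • t) = a • sLin k X C i t := by
    intro t
    induction t using TensorProduct.induction_on with
    | zero => rw [smul_zero, map_zero, smul_zero]
    | tmul w l =>
        have h1 : a • (w ⊗ₜ[Lam0 k X] l : TCmod k X C i) = w ⊗ₜ[Lam0 k X] (l * a.unop) := by
          conv_lhs => rw [← MulOpposite.op_unop a]
          exact opSmul_tmul k X _ a.unop w l
        rw [h1, sLin_tmul, sLin_tmul, SB, SB, Finsupp.smul_sum]
        refine Finsupp.sum_congr fun p _ => ?_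
        rw [Finsupp.smul_single]
        congr 1
        conv_rhs => rw [← MulOpposite.op_unop a]
        rw [smul_eq_mul, ← MulOpposite.op_mul, smul_mul_assoc, mul_assoc]
    | add u v hu hv =>
        rw [smul_add (a := a) u v, map_add, map_add, hu, hv, smul_add]
  exact h t

/-- The section, as a `Λᵐᵒᵖ`-linear map. -/
noncomputable def sOp (i : ℕ) :
    TCmod k X C i →ₗ[(Lam k X)ᵐᵒᵖ] (Amb k X i →₀ (Lam k X)ᵐᵒᵖ) where
  toFun := sLin k X C i
  map_add' u v := map_add _ u v
  map_smul' a t := sLin_opsmul k X C i a t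

/-- The coefficient functionals. -/
noncomputable def coef (i : ℕ) (q : Amb k X i) (b : X) : TCmod k X C i →ₗ[k] k where
  toFun t := ((sLin k X C i t) q).unop (vtx k X i q) b
  map_add' u v := by
    rw [show sLin k X C i (u + v) = sLin k X C i u + sLin k X C i v from map_add _ u v]
    simp only [map_add, Finsupp.add_apply, MulOpposite.unop_add, IncidenceAlgebra.add_apply]
  map_smul' c t := by
    show ((sLin k X C i (c • t)) q).unop (vtx k X i q) b
      = c • ((sLin k X C i t) q).unop (vtx k X i q) b
    rw [← op_const_smul k X C i c t, sLin_opsmul, Finsupp.smul_apply, smul_eq_mul]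
    conv_lhs => rw [← MulOpposite.op_unop (sLin k X C i t q)]
    rw [← MulOpposite.op_mul, MulOpposite.unop_op, smul_one_lam, mul_diagHom_apply,
      smul_eq_mul, mul_comm]

end Smap

/-! ### Projectivity -/

section Proj

variable (C : ∀ i : ℕ, Set (Amb k X i))

/-- The generator `q ⊗ 1` (or `0` if `q ∉ C i`). -/
noncomputable def genOr (i : ℕ) (q : Amb k X i) : TCmod k X C i :=
  basElt k X C i q ⊗ₜ[Lam0 k X] 1

/-- The element `q ⊗ c_{vtx q, b}` (or `0` if `q ∉ C i`). -/
noncomputable def eOr (i : ℕ) (q : Amb k X i) (b : X) : TCmod k X C i :=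
  basElt k X C i q ⊗ₜ[Lam0 k X] cpath k X (vtx k X i q) b

theorem opSmul_genOr (i : ℕ) (q : Amb k X i) (b : X) :
    MulOpposite.op (cpath k X (vtx k X i q) b) • genOr k X C i q = eOr k X C i q b := by
  rw [genOr, eOr]
  have := opSmul_tmul k X ↥(Finsupp.supported k k (C i)) (cpath k X (vtx k X i q) b)
    (basElt k X C i q) 1
  erw [this, one_mul]

/-- The projection from the free module. -/
noncomputable def piMap (i : ℕ) :
    (Amb k X i →₀ (Lam k X)ᵐᵒᵖ) →ₗ[(Lam k X)ᵐᵒᵖ] TCmod k X C i :=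
  Finsupp.lsum ℕ fun q => LinearMap.toSpanSingleton _ _ (genOr k X C i q)

theorem piMap_single (i : ℕ) (q : Amb k X i) (a : (Lam k X)ᵐᵒᵖ) :
    piMap k X C i (Finsupp.single q a) = a • genOr k X C i q := by
  rw [piMap, Finsupp.lsum_single, LinearMap.toSpanSingleton_apply]

theorem piMap_sLin (i : ℕ) (t : TCmod k X C i) : piMap k X C i (sLin k X C i t) = t := by
  have h : ∀ t : ↥(Finsupp.supported k k (C i)) ⊗[Lam0 k X] Lam k X,
      piMap k X C i (sLin k X C i t) = t := by
    intro t
    induction t using TensorProduct.induction_on with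
    | zero => rw [map_zero, map_zero]; rfl
    | tmul w l =>
        rw [sLin_tmul, SB, map_finsuppSum]
        have hterm : ∀ p ∈ (w : Amb k X i →₀ k).support,
            piMap k X C i (Finsupp.single p
              (MulOpposite.op ((w : Amb k X i →₀ k) p • (statp k X (vtx k X i p) * l))))
            = (((w : Amb k X i →₀ k) p • basElt k X C i p :
                ↥(Finsupp.supported k k (C i))) ⊗ₜ[Lam0 k X] l : TCmod k X C i) := by
          intro p _
          rw [piMap_single]
          have h1 := opSmul_tmul k X ↥(Finsupp.supported k k (C i))
            ((w : Amb k X i →₀ k) p • (statp k X (vtx k X i p) * l)) (basElt k X C i p) 1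
          erw [genOr, h1, one_mul]
          have h2 : (w : Amb k X i →₀ k) p • (statp k X (vtx k X i p) * l)
              = ((fun _ : X => (w : Amb k X i →₀ k) p) : Lam0 k X) •
                  ((Pi.single (vtx k X i p) (1:k) : Lam0 k X) • l) := by
            rw [const_smul_lam]
            congr 1
            rw [lam0_smul_lam, diagHom_pi_single]
          rw [h2, ← TensorProduct.smul_tmul, ← TensorProduct.smul_tmul, const_smul_V,
            smul_comm, pisingle_smul_basElt, if_pos rfl]
        have hsum : ((w : Amb k X i →₀ k).sum fun p c => piMap k X C i (Finsupp.single p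
              (MulOpposite.op (c • (statp k X (vtx k X i p) * l)))))
            = ((w : Amb k X i →₀ k).sum fun p c => ((c • basElt k X C i p :
                ↥(Finsupp.supported k k (C i))) ⊗ₜ[Lam0 k X] l : TCmod k X C i)) :=
          Finsupp.sum_congr hterm
        rw [hsum]
        have h2 : ((w : Amb k X i →₀ k).sum fun p c =>
            ((c • basElt k X C i p : ↥(Finsupp.supported k k (C i))) ⊗ₜ[Lam0 k X] l
              : TCmod k X C i))
            = (((w : Amb k X i →₀ k).sum fun p c => c • basElt k X C i p)
                ⊗ₜ[Lam0 k X] l : TCmod k X C i) := by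
          exact (map_finsuppSum ((TensorProduct.mk (Lam0 k X)
            (↥(Finsupp.supported k k (C i))) (Lam k X)).flip l) _ _).symm
        rw [h2, V_sum_basElt]
    | add u v hu hv => rw [map_add, map_add, hu, hv]; rfl
  exact h t

theorem TC_projective (i : ℕ) : Module.Projective (Lam k X)ᵐᵒᵖ (TCmod k X C i) :=
  Module.Projective.of_split (sOp k X C i) (piMap k X C i)
    (LinearMap.ext fun t => piMap_sLin k X C i t)

theorem eOr_not_mem {i : ℕ} {q : Amb k X i} (h : q ∉ C i) (b : X) : eOr k X C i q b = 0 := by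
  rw [eOr, basElt, dif_neg h, TensorProduct.zero_tmul]; rfl

theorem sLin_eOr (i : ℕ) (q : Amb k X i) (b : X) (hq : q ∈ C i) :
    sLin k X C i (eOr k X C i q b) =
      Finsupp.single q (MulOpposite.op (cpath k X (vtx k X i q) b)) := by
  rw [eOr, sLin_tmul, SB, basElt_of_mem k X C hq]
  show Finsupp.sum (Finsupp.single q (1:k)) _ = _
  rw [Finsupp.sum_single_index]
  · rw [one_smul, statp_mul_cpath_self]
  · rw [zero_smul, MulOpposite.op_zero, Finsupp.single_zero]

open Classical in
theorem coef_eOr (i : ℕ) (q₀ : Amb k X i) (b₀ : X) (q : Amb k X i) (b : X) (hq : q ∈ C i) :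
    coef k X C i q₀ b₀ (eOr k X C i q b) =
      if q = q₀ ∧ b = b₀ ∧ vtx k X i q ≤ b then 1 else 0 := by
  classical
  show ((sLin k X C i (eOr k X C i q b)) q₀).unop (vtx k X i q₀) b₀ = _
  rw [sLin_eOr k X C i q b hq, Finsupp.single_apply]
  by_cases h : q = q₀
  · subst h
    rw [if_pos rfl, MulOpposite.unop_op, cpath_app]
    by_cases h2 : b₀ = b ∧ vtx k X i q ≤ b
    · rw [if_pos ⟨rfl, h2.1, h2.2⟩, if_pos ⟨rfl, h2.1.symm, h2.2⟩]
    · rw [if_neg (fun hh => h2 ⟨hh.2.1, hh.2.2⟩), if_neg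
        (fun hh => h2 ⟨hh.2.1.symm, hh.2.2⟩)]
  · rw [if_neg h, if_neg (fun hh => h hh.1), MulOpposite.unop_zero,
      IncidenceAlgebra.zero_apply]

end Proj

/-! ### The maps `Ee` and the key computation -/

section Ee

variable (C : ∀ i : ℕ, Set (Amb k X i))

/-- `Ee i b` sends `∑ c_q q` to `∑ c_q (q ⊗ c_{vtx q, b})`. -/
noncomputable def Ee (i : ℕ) (b : X) : (Amb k X i →₀ k) →ₗ[k] TCmod k X C i :=
  Finsupp.linearCombination k (fun q => eOr k X C i q b)

theorem eOr_not_le {i : ℕ} {q : Amb k X i} {b : X} (h : ¬ vtx k X i q ≤ b) :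
    eOr k X C i q b = 0 := by
  rw [eOr, cpath_zero_of_not_le k X h, TensorProduct.tmul_zero]; rfl

open Classical in
theorem basElt_tmul_cpath (i : ℕ) (p : Amb k X i) (u v : X) :
    (basElt k X C i p ⊗ₜ[Lam0 k X] cpath k X u v : TCmod k X C i) =
      if u = vtx k X i p then eOr k X C i p v else 0 := by
  have h1 : cpath k X u v = ((Pi.single u (1:k) : Lam0 k X)) • cpath k X u v := by
    rw [lam0_smul_lam, diagHom_pi_single, statp_mul_cpath_self]
  rw [h1, ← TensorProduct.smul_tmul, pisingle_smul_basElt]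
  by_cases h : u = vtx k X i p
  · rw [if_pos h, if_pos h, eOr, h]
  · rw [if_neg h, if_neg h, TensorProduct.zero_tmul]; rfl

theorem basElt_tmul_qel {i : ℕ} {p : Amb k X i} {z b : X} (hvz : vtx k X i p ≤ z)
    (hzb : z ≤ b) :
    (basElt k X C i p ⊗ₜ[Lam0 k X] (qel k X z * cpath k X z b) : TCmod k X C i) =
      eOr k X C i p b := by
  classical
  rw [qel_mul_cpath k X hzb, TensorProduct.tmul_sum]
  rw [Finset.sum_congr rfl (fun u _ => basElt_tmul_cpath k X C i p u b)]
  erw [Finset.sum_ite_eq' (Finset.univ.filter (· ≤ z)) (vtx k X i p)]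
  erw [if_pos (show vtx k X i p ∈ Finset.univ.filter (fun x => x ≤ z) from
    Finset.mem_filter.2 ⟨Finset.mem_univ _, hvz⟩)]

theorem tmul_qel_cpath {i : ℕ} (w : ↥(Finsupp.supported k k (C i))) {z b : X}
    (hzb : z ≤ b) (hw : ∀ q ∈ (w : Amb k X i →₀ k).support, vtx k X i q ≤ z) :
    (w ⊗ₜ[Lam0 k X] (qel k X z * cpath k X z b) : TCmod k X C i) =
      Ee k X C i b (w : Amb k X i →₀ k) := by
  conv_lhs => rw [← V_sum_basElt k X C i w]
  have h2 : ((((w : Amb k X i →₀ k).sum fun p c => c • basElt k X C i p))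
        ⊗ₜ[Lam0 k X] (qel k X z * cpath k X z b) : TCmod k X C i)
      = (w : Amb k X i →₀ k).sum fun p c =>
          ((c • basElt k X C i p : ↥(Finsupp.supported k k (C i)))
            ⊗ₜ[Lam0 k X] (qel k X z * cpath k X z b) : TCmod k X C i) :=
    map_finsuppSum ((TensorProduct.mk (Lam0 k X) (↥(Finsupp.supported k k (C i)))
      (Lam k X)).flip (qel k X z * cpath k X z b)) _ _
  rw [h2, Ee, Finsupp.linearCombination_apply]
  refine Finsupp.sum_congr fun p hp => ?_
  show ((((w : Amb k X i →₀ k) p) • basElt k X C i p : ↥(Finsupp.supported k k (C i)))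
      ⊗ₜ[Lam0 k X] (qel k X z * cpath k X z b) : TCmod k X C i)
      = ((w : Amb k X i →₀ k) p) • eOr k X C i p b
  rw [← TensorProduct.smul_tmul', basElt_tmul_qel k X C (hw p hp) hzb]; rfl

/-- Every element of `kC^i ⊗ Λ` is a `k`-linear combination of the `eOr`'s. -/
theorem span_eOr (i : ℕ) (t : TCmod k X C i) :
    t ∈ Submodule.span k (Set.range fun j : Amb k X i × X => eOr k X C i j.1 j.2) := by
  classical
  have h : ∀ t : ↥(Finsupp.supported k k (C i)) ⊗[Lam0 k X] Lam k X,
      (t : TCmod k X C i) ∈ Submodule.span k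
        (Set.range fun j : Amb k X i × X => eOr k X C i j.1 j.2) := by
    intro t
    induction t using TensorProduct.induction_on with
    | zero => exact Submodule.zero_mem _
    | tmul w l =>
        show (w ⊗ₜ[Lam0 k X] l : TCmod k X C i) ∈ _
        have hl : (w ⊗ₜ[Lam0 k X] l : TCmod k X C i) = ∑ uv ∈ (Finset.univ : Finset (X × X)),
            (w ⊗ₜ[Lam0 k X] (l uv.1 uv.2 • cpath k X uv.1 uv.2) : TCmod k X C i) := by
          conv_lhs => rw [lam_eq_sum_cpath k X l]
          rw [TensorProduct.tmul_sum]
        rw [hl]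
        refine Submodule.sum_mem _ fun uv _ => ?_
        have h1 : (w ⊗ₜ[Lam0 k X] (l uv.1 uv.2 • cpath k X uv.1 uv.2) : TCmod k X C i)
            = l uv.1 uv.2 • (w ⊗ₜ[Lam0 k X] cpath k X uv.1 uv.2 : TCmod k X C i) := by
          rw [← const_smul_lam, ← TensorProduct.smul_tmul, const_smul_V,
            TensorProduct.smul_tmul']
        rw [h1]
        refine Submodule.smul_mem _ _ ?_
        have hw2 : (w ⊗ₜ[Lam0 k X] cpath k X uv.1 uv.2 : TCmod k X C i)
            = (w : Amb k X i →₀ k).sum fun p c =>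
                ((c • basElt k X C i p : ↥(Finsupp.supported k k (C i)))
                  ⊗ₜ[Lam0 k X] cpath k X uv.1 uv.2 : TCmod k X C i) := by
          conv_lhs => rw [← V_sum_basElt k X C i w]
          exact map_finsuppSum ((TensorProduct.mk (Lam0 k X)
            (↥(Finsupp.supported k k (C i))) (Lam k X)).flip (cpath k X uv.1 uv.2)) _ _
        rw [hw2]
        refine Submodule.sum_mem _ fun p _ => ?_
        show (((w : Amb k X i →₀ k) p • basElt k X C i p : ↥(Finsupp.supported k k (C i)))
            ⊗ₜ[Lam0 k X] cpath k X uv.1 uv.2 : TCmod k X C i) ∈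
              Submodule.span k (Set.range fun j : Amb k X i × X => eOr k X C i j.1 j.2)
        rw [← TensorProduct.smul_tmul', basElt_tmul_cpath]
        refine Submodule.smul_mem _ _ ?_
        split_ifs
        · exact Submodule.subset_span (M := TCmod k X C i) ⟨(p, uv.2), rfl⟩
        · exact Submodule.zero_mem _
    | add u v hu hv => exact Submodule.add_mem _ hu hv
  exact h t

end Ee

/-! ### Representations and coefficient extraction -/

section Reps

variable (C : ∀ i : ℕ, Set (Amb k X i))

/-- The `k`-submodule underlying a `Λᵐᵒᵖ`-submodule of `kC^i ⊗ Λ`. -/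
noncomputable def kres (i : ℕ) (N : Submodule (Lam k X)ᵐᵒᵖ (TCmod k X C i)) :
    Submodule k (TCmod k X C i) where
  carrier := N
  add_mem' h1 h2 := N.add_mem h1 h2
  zero_mem' := N.zero_mem
  smul_mem' c t ht := by
    show c • t ∈ N
    rw [← op_const_smul]
    exact N.smul_mem _ ht

theorem mem_kres {i : ℕ} {N : Submodule (Lam k X)ᵐᵒᵖ (TCmod k X C i)} {t : TCmod k X C i} :
    t ∈ kres k X C i N ↔ t ∈ N := Iff.rfl

open Classical in
theorem exists_rep (i : ℕ) (t : TCmod k X C i) : ∃ c : (Amb k X i × X) →₀ k,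
    (∀ j ∈ c.support, j.1 ∈ C i ∧ vtx k X i j.1 ≤ j.2) ∧
    t = Finsupp.linearCombination k (fun j : Amb k X i × X => eOr k X C i j.1 j.2) c := by
  classical
  have h1 := span_eOr k X C i t
  rw [← Finsupp.range_linearCombination] at h1
  obtain ⟨c0, hc0⟩ := h1
  refine ⟨c0.filter (fun j => j.1 ∈ C i ∧ vtx k X i j.1 ≤ j.2), ?_, ?_⟩
  · intro j hj
    rw [Finsupp.support_filter, Finset.mem_filter] at hj
    exact hj.2
  · rw [← hc0]
    conv_lhs => rw [← Finsupp.filter_pos_add_filter_neg c0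
      (fun j => j.1 ∈ C i ∧ vtx k X i j.1 ≤ j.2)]
    rw [map_add]
    have hzero : Finsupp.linearCombination k
        (fun j : Amb k X i × X => eOr k X C i j.1 j.2)
        (c0.filter (fun j => ¬ (j.1 ∈ C i ∧ vtx k X i j.1 ≤ j.2))) = 0 := by
      rw [Finsupp.linearCombination_apply, Finsupp.sum]
      apply Finset.sum_eq_zero
      intro j hj
      rw [Finsupp.support_filter, Finset.mem_filter] at hj
      by_cases hmem : j.1 ∈ C i
      · have : ¬ vtx k X i j.1 ≤ j.2 := fun hle => hj.2 ⟨hmem, hle⟩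
        rw [eOr_not_le k X C this, smul_zero]
      · rw [eOr_not_mem k X C hmem, smul_zero]
    rw [hzero, add_zero]

open Classical in
theorem coef_rep (i : ℕ) (c : (Amb k X i × X) →₀ k)
    (hc : ∀ j ∈ c.support, j.1 ∈ C i ∧ vtx k X i j.1 ≤ j.2) (q₀ : Amb k X i) (b₀ : X) :
    coef k X C i q₀ b₀ (Finsupp.linearCombination k
      (fun j : Amb k X i × X => eOr k X C i j.1 j.2) c) = c (q₀, b₀) := by
  classical
  rw [Finsupp.linearCombination_apply, map_finsuppSum (coef k X C i q₀ b₀), Finsupp.sum]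
  rw [Finset.sum_eq_single (q₀, b₀)]
  · by_cases h : (q₀, b₀) ∈ c.support
    · rw [LinearMap.map_smul, coef_eOr k X C i q₀ b₀ q₀ b₀ (hc _ h).1,
        if_pos ⟨rfl, rfl, (hc _ h).2⟩, smul_eq_mul, mul_one]
    · rw [Finsupp.notMem_support_iff.1 h, zero_smul, map_zero]
  · intro j hj hne
    rw [LinearMap.map_smul, coef_eOr k X C i q₀ b₀ j.1 j.2 (hc _ hj).1, if_neg, smul_zero]
    rintro ⟨h1, h2, -⟩
    exact hne (by rw [← h1, ← h2])
  · intro h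
    rw [Finsupp.notMem_support_iff.1 h, zero_smul, map_zero]

open Classical in
theorem coef_Ee (i : ℕ) (b : X) (u : Amb k X i →₀ k)
    (hu : ∀ q ∈ u.support, q ∈ C i ∧ vtx k X i q ≤ b) (q₀ : Amb k X i) (b₀ : X) :
    coef k X C i q₀ b₀ (Ee k X C i b u) = if b = b₀ then u q₀ else 0 := by
  classical
  rw [Ee, Finsupp.linearCombination_apply, map_finsuppSum (coef k X C i q₀ b₀), Finsupp.sum]
  rw [Finset.sum_eq_single q₀]
  · by_cases h : q₀ ∈ u.support
    · rw [LinearMap.map_smul, coef_eOr k X C i q₀ b₀ q₀ b (hu _ h).1]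
      by_cases hb : b = b₀
      · rw [if_pos ⟨rfl, hb, (hu _ h).2⟩, if_pos hb, smul_eq_mul, mul_one]
      · rw [if_neg (fun hh => hb hh.2.1), if_neg hb, smul_zero]
    · rw [Finsupp.notMem_support_iff.1 h, zero_smul, map_zero]
      split_ifs <;> rfl
  · intro q hq hne
    rw [LinearMap.map_smul, coef_eOr k X C i q₀ b₀ q b (hu _ hq).1,
      if_neg (fun hh => hne hh.1), smul_zero]
  · intro h
    rw [Finsupp.notMem_support_iff.1 h, zero_smul, map_zero]

open Classical in
/-- The `b`-slice of a coefficient system. -/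
noncomputable def vslice (i : ℕ) (c : (Amb k X i × X) →₀ k) (b : X) : Amb k X i →₀ k :=
  (c.filter (fun j => j.2 = b)).sum fun j a => Finsupp.single j.1 a

theorem vslice_apply (i : ℕ) (c : (Amb k X i × X) →₀ k) (b : X) (q : Amb k X i) :
    vslice k X i c b q = c (q, b) := by
  classical
  rw [vslice, Finsupp.sum_apply, Finsupp.sum, Finset.sum_eq_single (q, b)]
  · rw [Finsupp.single_eq_same, Finsupp.filter_apply_pos (fun j : Amb k X i × X => j.2 = b) c (show (q, b).2 = b from rfl)]
  · intro j hj hne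
    rw [Finsupp.support_filter, Finset.mem_filter] at hj
    rw [Finsupp.single_apply, if_neg]
    intro hh
    exact hne (by rw [← hh, ← hj.2])
  · intro h
    rw [Finsupp.single_eq_same, Finsupp.notMem_support_iff.1 h]

theorem vslice_good (i : ℕ) (c : (Amb k X i × X) →₀ k)
    (hc : ∀ j ∈ c.support, j.1 ∈ C i ∧ vtx k X i j.1 ≤ j.2) (b : X) :
    ∀ q ∈ (vslice k X i c b).support, q ∈ C i ∧ vtx k X i q ≤ b := by
  intro q hq
  rw [Finsupp.mem_support_iff, vslice_apply] at hq
  exact hc _ (Finsupp.mem_support_iff.2 hq)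

open Classical in
theorem Ee_vslice (i : ℕ) (c : (Amb k X i × X) →₀ k) (b : X) :
    Ee k X C i b (vslice k X i c b) = Finsupp.linearCombination k
      (fun j : Amb k X i × X => eOr k X C i j.1 j.2) (c.filter (fun j => j.2 = b)) := by
  classical
  rw [vslice, map_finsuppSum (Ee k X C i b), Finsupp.linearCombination_apply]
  refine Finsupp.sum_congr fun j hj => ?_
  rw [Finsupp.support_filter, Finset.mem_filter] at hj
  rw [Ee, Finsupp.linearCombination_single, hj.2]

open Classical in
theorem lin_partition (i : ℕ) (c : (Amb k X i × X) →₀ k) :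
    Finsupp.linearCombination k (fun j : Amb k X i × X => eOr k X C i j.1 j.2) c
      = ∑ b ∈ (Finset.univ : Finset X), Ee k X C i b (vslice k X i c b) := by
  classical
  have hdec : c = ∑ b ∈ (Finset.univ : Finset X), c.filter (fun j => j.2 = b) := by
    ext j
    rw [Finsupp.finset_sum_apply]
    rw [Finset.sum_congr rfl (fun b _ => Finsupp.filter_apply (fun j : Amb k X i × X => j.2 = b) c j)]
    rw [Finset.sum_ite_eq Finset.univ j.2 (fun _ => c j), if_pos (Finset.mem_univ _)]
  conv_lhs => rw [hdec]
  rw [map_sum]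
  exact Finset.sum_congr rfl fun b _ => (Ee_vslice k X C i c b).symm

end Reps

/-! ### Structural lemmas about cycle data -/

section Cyc

variable {x : X} (D : CycleData k X x)

theorem Bset_subset_Kz (i : ℕ) (z : X) : Bset k X D.C i z ⊆ ↑(Kz k X D.C i z) := fun w hw =>
  (le_sup_left.trans_eq (D.compl i z)) (Submodule.subset_span hw)

theorem Kz_le_ker (C : ∀ i : ℕ, Set (Amb k X i)) (i : ℕ) (z : X) :
    Kz k X C i z ≤ LinearMap.ker (bd k X i) := le_trans inf_le_left inf_le_left

theorem Kz_le_supported (C : ∀ i : ℕ, Set (Amb k X i)) (i : ℕ) (z : X) :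
    Kz k X C i z ≤ Finsupp.supported k k (C (i + 1)) := le_trans inf_le_left inf_le_right

theorem Kz_le_lt (C : ∀ i : ℕ, Set (Amb k X i)) (i : ℕ) (z : X) :
    Kz k X C i z ≤ Finsupp.supported k k {p : Amb k X (i+1) | vtx k X (i+1) p < z} :=
  inf_le_right

theorem Kz_mono (C : ∀ i : ℕ, Set (Amb k X i)) (i : ℕ) {z z' : X} (h : z ≤ z') :
    Kz k X C i z ≤ Kz k X C i z' := by
  refine le_inf (le_trans inf_le_left le_rfl) ?_
  refine le_trans inf_le_right (Finsupp.supported_mono ?_)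
  intro p hp
  exact lt_of_lt_of_le hp h

theorem mem_C_fst {i : ℕ} {p : Amb k X (i + 1)} (hp : p ∈ D.C (i + 1)) :
    p.1 ∈ Finsupp.supported k k (D.C i) := by
  cases i with
  | zero =>
      rw [D.hC1] at hp
      obtain ⟨y, hy, rfl⟩ := hp
      exact Finsupp.single_mem_supported k 1 (by rw [D.hC0]; rfl)
  | succ j =>
      have hB : p.1 ∈ Bset k X D.C j p.2 := by
        show (⟨p.1, p.2⟩ : Amb k X (j + 2)) ∈ D.C (j + 2)
        exact hp
      exact Kz_le_supported k X D.C j p.2 (Bset_subset_Kz k X D j p.2 hB)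

theorem vtx_lt_of_mem {i : ℕ} {p : Amb k X (i + 1)} (hp : p ∈ D.C (i + 1)) :
    ∀ q ∈ p.1.support, vtx k X i q < p.2 := by
  cases i with
  | zero =>
      rw [D.hC1] at hp
      obtain ⟨y, hy, rfl⟩ := hp
      intro q hq
      have hqx : q = x := Finset.mem_singleton.1 (Finsupp.support_single_subset hq)
      subst hqx
      exact hy.lt
  | succ j =>
      intro q hq
      have hB : p.1 ∈ Bset k X D.C j p.2 := by
        show (⟨p.1, p.2⟩ : Amb k X (j + 2)) ∈ D.C (j + 2)
        exact hp
      have h2 := Kz_le_lt k X D.C j p.2 (Bset_subset_Kz k X D j p.2 hB)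
      exact (Finsupp.mem_supported k p.1).1 h2 hq

theorem bd_fst {i : ℕ} {p : Amb k X (i + 2)} (hp : p ∈ D.C (i + 2)) : bd k X i p.1 = 0 := by
  have hB : p.1 ∈ Bset k X D.C i p.2 := by
    show (⟨p.1, p.2⟩ : Amb k X (i + 2)) ∈ D.C (i + 2)
    exact hp
  exact LinearMap.mem_ker.1 (Kz_le_ker k X D.C i p.2 (Bset_subset_Kz k X D i p.2 hB))

theorem genOr_of_mem {i : ℕ} {q : Amb k X i} (hq : q ∈ D.C i) :
    genOr k X D.C i q = gen k X D.C i q hq := by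
  rw [genOr, basElt_of_mem k X D.C hq, gen]

/-- The key computation: `d_i (q ⊗ c_{vtx q, b}) = ∑_r (q.1)_r (r ⊗ c_{vtx r, b})`. -/
theorem d_eOr (d : ∀ i : ℕ, TCmod k X D.C (i + 1) →ₗ[(Lam k X)ᵐᵒᵖ] TCmod k X D.C i)
    (hd : IsDiff k X D d) (i : ℕ) {q : Amb k X (i + 1)} (hq : q ∈ D.C (i + 1)) {b : X}
    (hb : vtx k X (i + 1) q ≤ b) :
    d i (eOr k X D.C (i + 1) q b) = Ee k X D.C i b q.1 := by
  rw [← opSmul_genOr, genOr_of_mem k X D hq, LinearMap.map_smul,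
    hd i q hq ⟨q.1, mem_C_fst k X D hq⟩ rfl]
  have h1 := opSmul_tmul k X ↥(Finsupp.supported k k (D.C i))
    (cpath k X (vtx k X (i + 1) q) b) (⟨q.1, mem_C_fst k X D hq⟩ :
      ↥(Finsupp.supported k k (D.C i))) (qel k X (vtx k X (i + 1) q))
  erw [h1]
  exact tmul_qel_cpath k X D.C (⟨q.1, mem_C_fst k X D hq⟩ : ↥(Finsupp.supported k k (D.C i)))
    hb (fun r hr => (vtx_lt_of_mem k X D hq r hr).le)

theorem lmap_ksmul {C : ∀ i : ℕ, Set (Amb k X i)} {i j : ℕ}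
    (f : TCmod k X C i →ₗ[(Lam k X)ᵐᵒᵖ] TCmod k X C j) (c : k) (t : TCmod k X C i) :
    f (c • t) = c • f t := by
  rw [← op_const_smul, LinearMap.map_smul, op_const_smul]

theorem d_Ee (d : ∀ i : ℕ, TCmod k X D.C (i + 1) →ₗ[(Lam k X)ᵐᵒᵖ] TCmod k X D.C i)
    (hd : IsDiff k X D d) (i : ℕ) (b : X) (u : Amb k X (i + 1) →₀ k)
    (hu : ∀ q ∈ u.support, q ∈ D.C (i + 1) ∧ vtx k X (i + 1) q ≤ b) :
    d i (Ee k X D.C (i + 1) b u) = Ee k X D.C i b (bd k X i u) := by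
  rw [Ee, Finsupp.linearCombination_apply, map_finsuppSum (d i), bd,
    Finsupp.linearCombination_apply, map_finsuppSum (Ee k X D.C i b)]
  refine Finsupp.sum_congr fun q hq => ?_
  rw [lmap_ksmul k X (d i), map_smul (Ee k X D.C i b), d_eOr k X D d hd i (hu q hq).1 (hu q hq).2]

theorem dd_zero (d : ∀ i : ℕ, TCmod k X D.C (i + 1) →ₗ[(Lam k X)ᵐᵒᵖ] TCmod k X D.C i)
    (hd : IsDiff k X D d) (i : ℕ) (t : TCmod k X D.C (i + 2)) : d i (d (i + 1) t) = 0 := by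
  have hsp := span_eOr k X D.C (i + 2) t
  induction hsp using Submodule.span_induction with
  | mem u hu =>
      obtain ⟨j, rfl⟩ := hu
      show d i (d (i + 1) (eOr k X D.C (i + 2) j.1 j.2)) = 0
      by_cases h1 : j.1 ∈ D.C (i + 2)
      · by_cases h2 : vtx k X (i + 2) j.1 ≤ j.2
        · rw [d_eOr k X D d hd (i + 1) h1 h2, d_Ee k X D d hd i j.2 j.1.1
            (fun q hq => ⟨(Finsupp.mem_supported k j.1.1).1 (mem_C_fst k X D h1) hq,
              ((vtx_lt_of_mem k X D h1 q hq).le.trans h2)⟩),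
            bd_fst k X D h1, map_zero]
        · rw [eOr_not_le k X D.C h2, map_zero, map_zero]
      · rw [eOr_not_mem k X D.C h1, map_zero, map_zero]
  | zero => show d i (d (i + 1) 0) = 0; rw [map_zero, map_zero]
  | add u v _ _ hu hv =>
      show d i (d (i + 1) (u + v)) = 0
      rw [map_add, map_add, hu, hv, add_zero]
  | smul c u _ hu =>
      show d i (d (i + 1) (c • u)) = 0
      rw [lmap_ksmul k X (d (i + 1)), lmap_ksmul k X (d i), hu, smul_zero]

end Cyc

/-! ### The "no top coefficient" lemma and the span of the kernel -/

section NoTop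

variable {x : X} (D : CycleData k X x)

theorem noTop0 {b : X} {v : Amb k X 1 →₀ k} (h1 : bd k X 0 v = 0)
    (h2 : v ∈ Finsupp.supported k k (D.C 1)) (h3 : ∀ q ∈ v.support, vtx k X 1 q ≤ b) :
    ∀ q ∈ v.support, vtx k X 1 q < b := by
  intro q hq
  refine lt_of_le_of_ne (h3 q hq) ?_
  intro hqb
  have hqC := (Finsupp.mem_supported k v).1 h2 hq
  rw [D.hC1] at hqC
  obtain ⟨y, hy, hq_eq⟩ := hqC
  have hq2 : q.2 = b := hqb
  have hyb : y = b := by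
    have : q.2 = y := by rw [hq_eq]
    rw [← this, hq2]
  subst hyb
  have hall : ∀ p ∈ v.support, p = (⟨Finsupp.single x 1, y⟩ : Amb k X 1) := by
    intro p hp
    have hpC := (Finsupp.mem_supported k v).1 h2 hp
    rw [D.hC1] at hpC
    obtain ⟨y', hy', hp_eq⟩ := hpC
    have hy'le : y' ≤ y := by
      have := h3 p hp
      rw [hp_eq] at this
      exact this
    rcases eq_or_lt_of_le hy'le with he | hlt
    · rw [hp_eq, he]
    · exact absurd hlt (hy.2 hy'.lt)
  have hsub : v.support ⊆ {(⟨Finsupp.single x 1, y⟩ : Amb k X 1)} := fun p hp =>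
    Finset.mem_singleton.2 (hall p hp)
  have hveq := Finsupp.support_subset_singleton.1 hsub
  rw [hveq, bd] at h1; erw [Finsupp.linearCombination_single] at h1
  have h1x := congrArg (fun w => w x) h1
  simp only [Finsupp.smul_apply, Finsupp.coe_zero, Pi.zero_apply] at h1x
  erw [Finsupp.smul_apply, Finsupp.single_eq_same, smul_eq_mul, mul_one] at h1x
  have : q = (⟨Finsupp.single x 1, y⟩ : Amb k X 1) := hall q hq
  rw [Finsupp.mem_support_iff, this] at hq
  exact hq h1x

theorem noTopSucc (i : ℕ) {b : X} {v : Amb k X (i + 2) →₀ k} (h1 : bd k X (i + 1) v = 0)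
    (h2 : v ∈ Finsupp.supported k k (D.C (i + 2)))
    (h3 : ∀ q ∈ v.support, vtx k X (i + 2) q ≤ b) :
    ∀ q ∈ v.support, vtx k X (i + 2) q < b := by
  classical
  intro q hq
  refine lt_of_le_of_ne (h3 q hq) ?_
  intro hqb
  have hmemsup : ∀ p ∈ v.support, p ∈ D.C (i + 2) := fun p hp =>
    (Finsupp.mem_supported k v).1 h2 hp
  set v₁ : Amb k X (i + 2) →₀ k := v.filter (fun p : Amb k X (i + 2) => p.2 = b) with hv₁def
  set v₂ : Amb k X (i + 2) →₀ k :=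
    v.filter (fun p : Amb k X (i + 2) => ¬ p.2 = b) with hv₂def
  have hsupp1 : v₁.support = v.support.filter (fun p : Amb k X (i + 2) => p.2 = b) :=
    Finsupp.support_filter _ _
  have hsupp2 : v₂.support = v.support.filter (fun p : Amb k X (i + 2) => ¬ p.2 = b) :=
    Finsupp.support_filter _ _
  have hsnd : ∀ p ∈ v₁.support, p.2 = b := by
    intro p hp
    rw [hsupp1, Finset.mem_filter] at hp
    exact hp.2
  have hmemB : ∀ p ∈ v₁.support, p.1 ∈ Bset k X D.C i b := by
    intro p hp
    rw [hsupp1, Finset.mem_filter] at hp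
    show (⟨p.1, b⟩ : Amb k X (i + 2)) ∈ D.C (i + 2)
    rw [← hp.2]
    exact hmemsup p hp.1
  have hb1 : bd k X (i + 1) v₁ ∈ Submodule.span k (Bset k X D.C i b) := by
    rw [bd, Finsupp.linearCombination_apply, Finsupp.sum]
    exact Submodule.sum_mem _ fun p hp =>
      Submodule.smul_mem _ _ (Submodule.subset_span (hmemB p hp))
  have hb2 : bd k X (i + 1) v₂ ∈ Kpred k X D.C i b := by
    rw [bd, Finsupp.linearCombination_apply, Finsupp.sum]
    refine Submodule.sum_mem _ fun p hp => Submodule.smul_mem _ _ ?_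
    rw [hsupp2, Finset.mem_filter] at hp
    have hplt : p.2 < b := lt_of_le_of_ne (h3 p hp.1) hp.2
    obtain ⟨z', hz'1, hz'2⟩ := exists_le_covBy_of_lt hplt
    have hBp : p.1 ∈ Bset k X D.C i p.2 := by
      show (⟨p.1, p.2⟩ : Amb k X (i + 2)) ∈ D.C (i + 2)
      exact hmemsup p hp.1
    have hKz : p.1 ∈ Kz k X D.C i z' :=
      Kz_mono k X D.C i hz'1 (Bset_subset_Kz k X D i p.2 hBp)
    exact (le_iSup₂ (f := fun z'' (_ : z'' ∈ {z' : X | z' ⋖ b}) => Kz k X D.C i z'')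
      z' hz'2) hKz
  have hsum0 : bd k X (i + 1) v₁ + bd k X (i + 1) v₂ = 0 := by
    rw [← map_add, Finsupp.filter_pos_add_filter_neg, h1]
  have hmem2 : bd k X (i + 1) v₁ ∈ Kpred k X D.C i b := by
    rw [eq_neg_of_add_eq_zero_left hsum0]
    exact Submodule.neg_mem _ hb2
  have hzero : bd k X (i + 1) v₁ = 0 := by
    have hmem : bd k X (i + 1) v₁ ∈ Submodule.span k (Bset k X D.C i b) ⊓
        Kpred k X D.C i b := Submodule.mem_inf.2 ⟨hb1, hmem2⟩
    rw [D.disj i b] at hmem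
    exact (Submodule.mem_bot k).1 hmem
  -- linear independence
  have hqsup : q ∈ v₁.support := by
    rw [hsupp1, Finset.mem_filter]
    exact ⟨hq, hqb⟩
  have hinj : ∀ p1 ∈ v₁.support.attach, ∀ p2 ∈ v₁.support.attach,
      (⟨p1.1.1, hmemB p1.1 p1.2⟩ : ↥(Bset k X D.C i b)) = ⟨p2.1.1, hmemB p2.1 p2.2⟩ →
        p1 = p2 := by
    intro p1 _ p2 _ hfe
    have h11 : p1.1.1 = p2.1.1 := congrArg Subtype.val hfe
    have hb1' : p1.1.2 = b := hsnd p1.1 p1.2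
    have hb2' : p2.1.2 = b := hsnd p2.1 p2.2
    apply Subtype.ext
    exact Prod.ext h11 (hb1'.trans hb2'.symm)
  have hs : ∑ w ∈ v₁.support.attach.image
      (fun p : {p // p ∈ v₁.support} => (⟨p.1.1, hmemB p.1 p.2⟩ : ↥(Bset k X D.C i b))),
      v₁ (⟨(w : Amb k X (i + 1) →₀ k), b⟩ : Amb k X (i + 2)) • (w : Amb k X (i + 1) →₀ k)
      = bd k X (i + 1) v₁ := by
    rw [Finset.sum_image hinj]
    rw [bd, Finsupp.linearCombination_apply, Finsupp.sum, ← Finset.sum_attach v₁.support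
      (fun p => v₁ p • p.1)]
    refine Finset.sum_congr rfl fun p _ => ?_
    have hpb : p.1.2 = b := hsnd p.1 p.2
    have : (⟨p.1.1, b⟩ : Amb k X (i + 2)) = p.1 := by
      rw [← hpb]
      rfl
    rw [this]

  have hzeroall := linearIndependent_iff'.1 (D.indep i b) _ _ (hs.trans hzero)
  have hqmem : (⟨q.1, hmemB q hqsup⟩ : ↥(Bset k X D.C i b)) ∈ v₁.support.attach.image
      (fun p : {p // p ∈ v₁.support} => (⟨p.1.1, hmemB p.1 p.2⟩ : ↥(Bset k X D.C i b))) :=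
    Finset.mem_image_of_mem _ (Finset.mem_attach _ ⟨q, hqsup⟩)
  have hval := hzeroall _ hqmem
  have hqb' : (⟨q.1, b⟩ : Amb k X (i + 2)) = q := by
    have hh : q.2 = b := hqb
    rw [← hh]
    rfl
  rw [hqb'] at hval
  have hvq : v₁ q = v q := Finsupp.filter_apply_pos _ v hqb
  rw [hvq] at hval
  exact (Finsupp.mem_support_iff.1 hq) hval

theorem noTopAll (i : ℕ) {b : X} {v : Amb k X (i + 1) →₀ k} (h1 : bd k X i v = 0)
    (h2 : v ∈ Finsupp.supported k k (D.C (i + 1)))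
    (h3 : ∀ q ∈ v.support, vtx k X (i + 1) q ≤ b) : v ∈ Kz k X D.C i b := by
  refine Submodule.mem_inf.2 ⟨Submodule.mem_inf.2 ⟨LinearMap.mem_ker.2 h1, h2⟩, ?_⟩
  rw [Finsupp.mem_supported]
  intro q hq
  show vtx k X (i + 1) q < b
  cases i with
  | zero => exact noTop0 k X D h1 h2 h3 q hq
  | succ j => exact noTopSucc k X D j h1 h2 h3 q hq

theorem claimA (i : ℕ) (z : X) : Kz k X D.C i z ≤
    ⨆ z' ∈ {z' : X | z' ≤ z}, Submodule.span k (Bset k X D.C i z') := by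
  induction z using WellFoundedLT.induction with
  | _ z ih =>
      rw [← D.compl i z]
      refine sup_le ?_ ?_
      · exact le_iSup₂ (f := fun z'' (_ : z'' ∈ {z' : X | z' ≤ z}) =>
          Submodule.span k (Bset k X D.C i z'')) z (le_refl z)
      · rw [Kpred]
        refine iSup₂_le fun z' hz' => ?_
        refine (ih z' hz'.lt).trans ?_
        refine iSup₂_le fun z'' hz'' => ?_
        exact le_iSup₂ (f := fun z'' (_ : z'' ∈ {z' : X | z' ≤ z}) =>
          Submodule.span k (Bset k X D.C i z'')) z'' (le_trans hz'' hz'.le)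

end NoTop

/-! ### The main theorem -/

section Main

variable {x : X} (D : CycleData k X x)
variable (d : ∀ i : ℕ, TCmod k X D.C (i + 1) →ₗ[(Lam k X)ᵐᵒᵖ] TCmod k X D.C i)
variable (ε : TCmod k X D.C 0 →ₗ[(Lam k X)ᵐᵒᵖ] SMod k X x)

/-- The identity map `S_x → k`. -/
def smodK (z : X) (s : SMod k X z) : k := s

theorem eps_ksmul (c : k) (t : TCmod k X D.C 0) : ε (c • t) = c • ε t := by
  rw [← op_const_smul k X D.C 0 c t, LinearMap.map_smul]
  have h1 : (MulOpposite.op (c • (1 : Lam k X))) • (ε t)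
      = evalHom k X x (c • (1 : Lam k X)) • (ε t) := rfl
  have h2 : evalHom k X x (c • (1 : Lam k X)) = c := by
    show (c • (1 : Lam k X)) x x = c
    rw [IncidenceAlgebra.constSMul_apply, IncidenceAlgebra.one_apply, if_pos rfl,
      smul_eq_mul, mul_one]
  rw [h1, h2]

theorem eps_eOr (hε : ∀ (w : ↥(Finsupp.supported k k (D.C 0)))
      (_hw : (w : Amb k X 0 →₀ k) = Finsupp.single x 1) (a : X),
      ε (w ⊗ₜ[Lam0 k X] cpath k X x a) = if x = a then (1 : SMod k X x) else 0) (b : X) :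
    ε (eOr k X D.C 0 x b) = if x = b then (1 : SMod k X x) else 0 := by
  have hx : x ∈ D.C 0 := by rw [D.hC0]; rfl
  unfold eOr; erw [basElt_of_mem k X D.C hx]
  exact hε (bas k X D.C 0 x hx) rfl b

theorem eps_surj (hε : ∀ (w : ↥(Finsupp.supported k k (D.C 0)))
      (_hw : (w : Amb k X 0 →₀ k) = Finsupp.single x 1) (a : X),
      ε (w ⊗ₜ[Lam0 k X] cpath k X x a) = if x = a then (1 : SMod k X x) else 0) :
    Function.Surjective ε := by
  intro s
  refine ⟨smodK k X x s • eOr k X D.C 0 x x, ?_⟩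
  rw [eps_ksmul k X D ε, eps_eOr k X D ε hε, if_pos rfl]
  show smodK k X x s * (1 : k) = s
  rw [mul_one]
  rfl

theorem bd_support_good {i : ℕ} {b : X} (u : Amb k X (i + 1) →₀ k)
    (hu : ∀ p ∈ u.support, p ∈ D.C (i + 1) ∧ vtx k X (i + 1) p ≤ b) :
    ∀ q ∈ (bd k X i u).support, q ∈ D.C i ∧ vtx k X i q ≤ b := by
  classical
  intro q hq
  rw [bd, Finsupp.linearCombination_apply] at hq
  have h1 := Finsupp.support_sum hq
  obtain ⟨p, hp, hqp⟩ := Finset.mem_biUnion.1 h1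
  have hqp' : q ∈ p.1.support := Finsupp.support_smul hqp
  exact ⟨(Finsupp.mem_supported k p.1).1 (mem_C_fst k X D (hu p hp).1) hqp',
    ((vtx_lt_of_mem k X D (hu p hp).1 q hqp').le.trans (hu p hp).2)⟩

theorem ker_eps (hd : IsDiff k X D d)
    (hε : ∀ (w : ↥(Finsupp.supported k k (D.C 0)))
      (_hw : (w : Amb k X 0 →₀ k) = Finsupp.single x 1) (a : X),
      ε (w ⊗ₜ[Lam0 k X] cpath k X x a) = if x = a then (1 : SMod k X x) else 0) :
    LinearMap.ker ε = LinearMap.range (d 0) := by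
  classical
  apply le_antisymm
  · intro t ht
    rw [LinearMap.mem_ker] at ht
    obtain ⟨c, hc, rfl⟩ := exists_rep k X D.C 0 t
    have hj1 : ∀ j ∈ c.support, j.1 = x := by
      intro j hj
      have := (hc j hj).1
      rw [D.hC0] at this
      exact this
    have h1 : ε (Finsupp.linearCombination k
        (fun j : Amb k X 0 × X => eOr k X D.C 0 j.1 j.2) c)
        = c.sum fun j a => a • ε (eOr k X D.C 0 j.1 j.2) := by
      rw [Finsupp.linearCombination_apply, map_finsuppSum ε]
      exact Finsupp.sum_congr fun j _ => eps_ksmul k X D ε _ _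
    have h2 : (c.sum fun j a => a • ε (eOr k X D.C 0 j.1 j.2))
        = (c.sum fun j a => a • (if x = j.2 then (1 : SMod k X x) else 0)) := by
      refine Finsupp.sum_congr fun j hj => ?_
      rw [hj1 j hj, eps_eOr k X D ε hε]
    have h4 : (c.sum fun j a => a • (if x = j.2 then (1 : SMod k X x) else 0))
        = c (x, x) • (1 : SMod k X x) := by
      rw [Finsupp.sum, Finset.sum_eq_single ((x, x) : Amb k X 0 × X)]
      · rw [if_pos rfl]
      · intro j hj hne
        by_cases hxj : x = j.2
        · exact absurd (Prod.ext (hj1 j hj) hxj.symm) hne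
        · rw [if_neg hxj, smul_zero]
      · intro h
        rw [Finsupp.notMem_support_iff.1 h, zero_smul]
    have hcxx : c (x, x) = 0 := by
      have := ht
      rw [h1, h2, h4] at this
      have h5 : c (x, x) * (1 : k) = 0 := this
      rw [mul_one] at h5
      exact h5
    rw [Finsupp.linearCombination_apply, Finsupp.sum]
    refine Submodule.sum_mem _ fun j hj => ?_
    by_cases hx2 : j.2 = x
    · have hjx : j = ((x : Amb k X 0), x) := Prod.ext (hj1 j hj) hx2
      rw [hjx]; erw [hcxx, zero_smul]
      exact Submodule.zero_mem _
    · refine (mem_kres k X D.C).1 (Submodule.smul_mem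
        (kres k X D.C 0 (LinearMap.range (d 0))) _ ?_)
      show eOr k X D.C 0 j.1 j.2 ∈ LinearMap.range (d 0)
      have hle : (x : X) ≤ j.2 := by
        have := (hc j hj).2
        rw [hj1 j hj] at this
        exact this
      have hlt : x < j.2 := lt_of_le_of_ne hle (fun he => hx2 he.symm)
      obtain ⟨y, hy1, hy2⟩ := exists_covBy_le_of_lt hlt
      have hq : (⟨Finsupp.single x 1, y⟩ : Amb k X 1) ∈ D.C 1 := by
        rw [D.hC1]
        exact ⟨y, hy1, rfl⟩
      have hd0 := d_eOr k X D d hd 0 hq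
        (show vtx k X 1 (⟨Finsupp.single x 1, y⟩ : Amb k X 1) ≤ j.2 from hy2)
      have hEe : Ee k X D.C 0 j.2 (Finsupp.single x (1:k)) = eOr k X D.C 0 x j.2 := by
        rw [Ee]; erw [Finsupp.linearCombination_single, one_smul]
      rw [hj1 j hj]
      exact ⟨_, hd0.trans hEe⟩
  · rintro t ⟨u, rfl⟩
    rw [LinearMap.mem_ker]
    have hsp := span_eOr k X D.C 1 u
    induction hsp using Submodule.span_induction with
    | mem w hw =>
        obtain ⟨j, rfl⟩ := hw
        show ε (d 0 (eOr k X D.C 1 j.1 j.2)) = 0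
        by_cases h1 : j.1 ∈ D.C 1
        · by_cases h2 : vtx k X 1 j.1 ≤ j.2
          · rw [d_eOr k X D d hd 0 h1 h2]
            have h3 := h1
            rw [D.hC1] at h3
            obtain ⟨y, hy, hje⟩ := h3
            rw [hje]
            show ε (Ee k X D.C 0 j.2 (Finsupp.single x 1)) = 0
            rw [Ee]; erw [Finsupp.linearCombination_single, one_smul, eps_eOr k X D ε hε]
            rw [if_neg]
            intro he
            rw [hje] at h2
            have : x < j.2 := lt_of_lt_of_le hy.lt h2
            rw [← he] at this
            exact lt_irrefl x this
          · rw [eOr_not_le k X D.C h2, map_zero, map_zero]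
        · rw [eOr_not_mem k X D.C h1, map_zero, map_zero]
    | zero => show ε (d 0 0) = 0; rw [map_zero, map_zero]
    | add u v _ _ hu hv =>
        show ε (d 0 (u + v)) = 0
        rw [map_add, map_add, hu, hv, add_zero]
    | smul c u _ hu =>
        show ε (d 0 (c • u)) = 0
        rw [lmap_ksmul k X (d 0), eps_ksmul k X D ε, hu, smul_zero]

theorem exact_d (hd : IsDiff k X D d) (i : ℕ) :
    LinearMap.ker (d i) = LinearMap.range (d (i + 1)) := by
  classical
  apply le_antisymm
  · intro t ht
    rw [LinearMap.mem_ker] at ht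
    obtain ⟨c, hc, rfl⟩ := exists_rep k X D.C (i + 1) t
    have hdt : d i (Finsupp.linearCombination k
        (fun j : Amb k X (i + 1) × X => eOr k X D.C (i + 1) j.1 j.2) c)
        = ∑ b ∈ (Finset.univ : Finset X),
            Ee k X D.C i b (bd k X i (vslice k X (i + 1) c b)) := by
      rw [lin_partition k X D.C (i + 1) c, map_sum]
      exact Finset.sum_congr rfl fun b _ =>
        d_Ee k X D d hd i b _ (vslice_good k X D.C (i + 1) c hc b)
    have hbd0 : ∀ b : X, bd k X i (vslice k X (i + 1) c b) = 0 := by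
      intro b
      ext q₀
      have h0 : coef k X D.C i q₀ b (d i (Finsupp.linearCombination k
          (fun j : Amb k X (i + 1) × X => eOr k X D.C (i + 1) j.1 j.2) c)) = 0 := by
        rw [ht, map_zero]
      rw [hdt, map_sum] at h0
      have hterm : ∀ b' ∈ (Finset.univ : Finset X),
          coef k X D.C i q₀ b (Ee k X D.C i b' (bd k X i (vslice k X (i + 1) c b')))
            = if b' = b then (bd k X i (vslice k X (i + 1) c b')) q₀ else 0 := fun b' _ =>
        coef_Ee k X D.C i b' _
          (bd_support_good k X D _ (vslice_good k X D.C (i + 1) c hc b')) q₀ b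
      rw [Finset.sum_congr rfl hterm, Finset.sum_ite_eq' Finset.univ b
        (fun b' => (bd k X i (vslice k X (i + 1) c b')) q₀),
        if_pos (Finset.mem_univ b)] at h0
      rw [h0]
      rfl
    have hKz : ∀ b : X, vslice k X (i + 1) c b ∈ Kz k X D.C i b := fun b =>
      noTopAll k X D i (hbd0 b)
        ((Finsupp.mem_supported k _).2 fun q hq => (vslice_good k X D.C (i + 1) c hc b q hq).1)
        (fun q hq => (vslice_good k X D.C (i + 1) c hc b q hq).2)
    have hrange : ∀ b : X, Ee k X D.C (i + 1) b (vslice k X (i + 1) c b)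
        ∈ LinearMap.range (d (i + 1)) := by
      intro b
      have h1 := claimA k X D i b (hKz b)
      have h2 : (⨆ z' ∈ {z' : X | z' ≤ b}, Submodule.span k (Bset k X D.C i z')) ≤
          Submodule.comap (Ee k X D.C (i + 1) b)
            (kres k X D.C (i + 1) (LinearMap.range (d (i + 1)))) := by
        refine iSup₂_le fun z hz => ?_
        rw [Submodule.span_le]
        intro w hw
        rw [SetLike.mem_coe, Submodule.mem_comap]
        show Ee k X D.C (i + 1) b w ∈ LinearMap.range (d (i + 1))
        have hq : (⟨w, z⟩ : Amb k X (i + 2)) ∈ D.C (i + 2) := hw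
        have hdw := d_eOr k X D d hd (i + 1) hq
          (show vtx k X (i + 2) (⟨w, z⟩ : Amb k X (i + 2)) ≤ b from hz)
        exact ⟨_, hdw⟩
      exact h2 h1
    rw [lin_partition k X D.C (i + 1) c]
    exact Submodule.sum_mem _ fun b _ => hrange b
  · rintro t ⟨u, rfl⟩
    rw [LinearMap.mem_ker]
    exact dd_zero k X D d hd i u

theorem range_rad (hd : IsDiff k X D d) (i : ℕ) :
    LinearMap.range (d i) ≤ radMod k X (TCmod k X D.C i) := by
  rintro t ⟨u, rfl⟩
  have hsp := span_eOr k X D.C (i + 1) u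
  induction hsp using Submodule.span_induction with
  | mem w hw =>
      obtain ⟨j, rfl⟩ := hw
      show d i (eOr k X D.C (i + 1) j.1 j.2) ∈ radMod k X (TCmod k X D.C i)
      by_cases h1 : j.1 ∈ D.C (i + 1)
      · by_cases h2 : vtx k X (i + 1) j.1 ≤ j.2
        · rw [d_eOr k X D d hd i h1 h2, Ee, Finsupp.linearCombination_apply, Finsupp.sum]
          refine Submodule.sum_mem _ fun r hr => ?_
          refine (mem_kres k X D.C).1 (Submodule.smul_mem
            (kres k X D.C i (radMod k X (TCmod k X D.C i))) _ ?_)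
          show eOr k X D.C i r j.2 ∈ radMod k X (TCmod k X D.C i)
          have hrlt : vtx k X i r < j.2 := lt_of_lt_of_le (vtx_lt_of_mem k X D h1 r hr) h2
          refine Submodule.subset_span ?_
          exact ⟨MulOpposite.op (cpath k X (vtx k X i r) j.2),
            isStrict_op_mem_jacobson k X _ (isStrict_cpath k X hrlt),
            genOr k X D.C i r, (opSmul_genOr k X D.C i r j.2).symm⟩
        · rw [eOr_not_le k X D.C h2, map_zero]
          exact Submodule.zero_mem _
      · rw [eOr_not_mem k X D.C h1, map_zero]
        exact Submodule.zero_mem _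
  | zero =>
      show d i 0 ∈ _
      rw [map_zero]
      exact Submodule.zero_mem _
  | add u v _ _ hu hv =>
      show d i (u + v) ∈ _
      rw [map_add]
      exact Submodule.add_mem _ hu hv
  | smul c u _ hu =>
      show d i (c • u) ∈ _
      rw [lmap_ksmul k X (d i)]
      exact Submodule.smul_mem (kres k X D.C i (radMod k X (TCmod k X D.C i))) c hu

end Main
/-- The complex `⋯ → kC^1⊗Λ → kC^0⊗Λ → S_x → 0`, with augmentation
`ε (x ⊗ c_{x,a}) = δ_{x,a} s` (`s = 1` the generator of `S_x`), is a minimal projective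
resolution of the simple right `Λ`-module `S_x`: all terms are projective, the sequence is
exact, and each differential has image contained in the radical of its codomain. -/
theorem stmt4 (x : X) (D : CycleData k X x)
    (d : ∀ i : ℕ, TCmod k X D.C (i + 1) →ₗ[(Lam k X)ᵐᵒᵖ] TCmod k X D.C i)
    (hd : IsDiff k X D d)
    (ε : TCmod k X D.C 0 →ₗ[(Lam k X)ᵐᵒᵖ] SMod k X x)
    (hε : ∀ (w : ↥(Finsupp.supported k k (D.C 0)))
      (_hw : (w : Amb k X 0 →₀ k) = Finsupp.single x 1) (a : X),
      ε (w ⊗ₜ[Lam0 k X] cpath k X x a) = if x = a then (1 : SMod k X x) else 0) :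
    (∀ i : ℕ, Module.Projective (Lam k X)ᵐᵒᵖ (TCmod k X D.C i)) ∧
    Function.Surjective ε ∧
    LinearMap.ker ε = LinearMap.range (d 0) ∧
    (∀ i : ℕ, LinearMap.ker (d i) = LinearMap.range (d (i + 1))) ∧
    (∀ i : ℕ, LinearMap.range (d i) ≤ radMod k X (TCmod k X D.C i)) := by
  refine ⟨fun i => TC_projective k X D.C i, eps_surj k X D ε hε, ker_eps k X D d ε hd hε,
    fun i => exact_d k X D d hd i, fun i => range_rad k X D d hd i⟩
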